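/- arXiv:2408.06695 — 9 statements merged into one kernel-verified Lean document; each statement's English description precedes it below -/
import Mathlib

section
/- Under the sensor setup and posterior definitions, define Σ̃^t = Σ^f (P^f)^{-1} P (P^f)^{-1} Σ^f + Σ^f (Σ_{j=1}^N a_j H_j^T (R_j^u)^{-1} R_j (R_j^u)^{-1} H_j) Σ^f, C̄ = I − Φ^f Σ^f, and R^{ts} = P^f C̄ Φ^{ts} C̄^T (P^f)^T. Then Σ^t − Σ = (Σ̃^t − Σ) + R^{ts}, and Σ̃^t − Σ ⪰ 0. (Proposition 1 of the paper.) -/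
/-!
`Σ̃ᵗ` is the covariance `K P Kᵀ + ∑ⱼ aⱼ Lⱼ Rⱼ Lⱼᵀ` of the linear fusion rule with the nominal gains
`K = Σᶠ (Pᶠ)⁻¹`, `Lⱼ = Σᶠ Hⱼᵀ (Rⱼᵘ)⁻¹`, and these satisfy the unbiasedness constraint
`K + ∑ⱼ aⱼ Lⱼ Hⱼ = Σᶠ ((Pᶠ)⁻¹ + Φᶠ) = I`. For any gains subject to this constraint, completing the
square around the optimal gains `Σ P⁻¹` and `Σ Hⱼᵀ Rⱼ⁻¹` gives
`K P Kᵀ + ∑ⱼ aⱼ Lⱼ Rⱼ Lⱼᵀ − Σ = X P Xᵀ + ∑ⱼ aⱼ Yⱼ Rⱼ Yⱼᵀ ⪰ 0`, with `X = K − Σ P⁻¹` and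
`Yⱼ = Lⱼ − Σ Hⱼᵀ Rⱼ⁻¹`: the cross terms collapse by the constraint and `Σ (P⁻¹ + Φ) Σ = Σ`.
The decomposition of `Σᵗ − Σ` comes from `Pᶠ C̄ = Σᶠ`, which makes `Rᵗˢ = Σᶠ Φᵗˢ Σᶠ`, and from
`aⱼ² = aⱼ + (aⱼ² − aⱼ)`.
-/

open Matrix

namespace Matrix

lemma IsHermitian.transpose_eq {k R : Type*} [Star R] [TrivialStar R] {M : Matrix k k R}
    (h : M.IsHermitian) : Mᵀ = M :=
  (isHermitian_iff_isSymm.mp h).eq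

lemma PosSemidef.mul_mul_transpose_same {k l R : Type*} [Fintype k] [Fintype l] [CommRing R]
    [PartialOrder R] [StarRing R] [TrivialStar R] {M : Matrix k k R} (h : M.PosSemidef)
    (B : Matrix l k R) : (B * M * Bᵀ).PosSemidef := by
  simpa using h.mul_mul_conjTranspose_same B

end Matrix

section Algebra

variable {n k α : Type*} [Fintype n] [Fintype k] [DecidableEq k] [CommRing α]

lemma sub_mul_mul_transpose_sub {M : Matrix k k α} (hM : Mᵀ = M) (hMu : IsUnit M)
    {S : Matrix n n α} (hS : Sᵀ = S) (K : Matrix n k α) (B : Matrix k n α) :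
    (K - S * Bᵀ * M⁻¹) * M * (K - S * Bᵀ * M⁻¹)ᵀ =
      K * M * Kᵀ - K * B * S - (K * B * S)ᵀ + S * (Bᵀ * M⁻¹ * B) * S := by
  have hdet := (isUnit_iff_isUnit_det M).mp hMu
  simp only [transpose_sub, transpose_mul, transpose_nonsing_inv, hM, hS,
    transpose_transpose, Matrix.sub_mul, Matrix.mul_sub, Matrix.mul_assoc,
    mul_nonsing_inv_cancel_left M _ hdet, nonsing_inv_mul_cancel_left M _ hdet]
  abel

variable [DecidableEq n]

lemma mul_one_sub_mul_inv_inv_add {A B : Matrix n n α} (hA : IsUnit A) (hAB : IsUnit (A⁻¹ + B)) :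
    A * (1 - B * (A⁻¹ + B)⁻¹) = (A⁻¹ + B)⁻¹ := by
  calc A * (1 - B * (A⁻¹ + B)⁻¹) = A * ((A⁻¹ + B) * (A⁻¹ + B)⁻¹ - B * (A⁻¹ + B)⁻¹) := by
        rw [mul_nonsing_inv _ ((isUnit_iff_isUnit_det _).mp hAB)]
    _ = (A⁻¹ + B)⁻¹ := by
        rw [← Matrix.sub_mul, add_sub_cancel_right,
          mul_nonsing_inv_cancel_left _ _ ((isUnit_iff_isUnit_det A).mp hA)]

end Algebra

section Fusion

variable {n ι : Type*} [Fintype ι] {m : ι → Type*} [∀ j, Fintype (m j)] [∀ j, DecidableEq (m j)]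

noncomputable def fusedInformation (a : ι → ℝ) (H : ∀ j, Matrix (m j) n ℝ)
    (R : ∀ j, Matrix (m j) (m j) ℝ) : Matrix n n ℝ :=
  ∑ j, a j • ((H j)ᵀ * (R j)⁻¹ * H j)

variable [Fintype n]

lemma posSemidef_fusedInformation {a : ι → ℝ} (ha : ∀ j, 0 ≤ a j)
    (H : ∀ j, Matrix (m j) n ℝ) {R : ∀ j, Matrix (m j) (m j) ℝ} (hR : ∀ j, (R j).PosSemidef) :
    (fusedInformation a H R).PosSemidef :=
  posSemidef_sum _ fun j _ => by
    simpa using ((hR j).inv.mul_mul_transpose_same (H j)ᵀ).smul (ha j)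

def linearFusionCovariance (a : ι → ℝ) (P : Matrix n n ℝ) (R : ∀ j, Matrix (m j) (m j) ℝ)
    (K : Matrix n n ℝ) (L : ∀ j, Matrix n (m j) ℝ) : Matrix n n ℝ :=
  K * P * Kᵀ + ∑ j, a j • (L j * R j * (L j)ᵀ)

variable [DecidableEq n]

lemma linearFusionCovariance_sub_eq {a : ι → ℝ} {P : Matrix n n ℝ} {R : ∀ j, Matrix (m j) (m j) ℝ}
    (H : ∀ j, Matrix (m j) n ℝ) (K : Matrix n n ℝ) (L : ∀ j, Matrix n (m j) ℝ) (S : Matrix n n ℝ) :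
    linearFusionCovariance a P R K L - (K + ∑ j, a j • (L j * H j)) * S
        - ((K + ∑ j, a j • (L j * H j)) * S)ᵀ + S * (P⁻¹ + fusedInformation a H R) * S =
      (K * P * Kᵀ - K * 1 * S - (K * 1 * S)ᵀ + S * (1ᵀ * P⁻¹ * 1) * S) +
        ∑ j, a j • (L j * R j * (L j)ᵀ - L j * H j * S - (L j * H j * S)ᵀ
          + S * ((H j)ᵀ * (R j)⁻¹ * H j) * S) := by
  simp only [linearFusionCovariance, fusedInformation, smul_sub, smul_add, Finset.sum_sub_distrib,
    Finset.sum_add_distrib, Matrix.add_mul, Matrix.mul_add, transpose_add, Finset.sum_mul,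
    Finset.mul_sum, transpose_sum, transpose_smul, Matrix.smul_mul, Matrix.mul_smul,
    transpose_one, Matrix.mul_one, Matrix.one_mul]
  abel

lemma posSemidef_linearFusionCovariance_sub {a : ι → ℝ} (ha : ∀ j, 0 ≤ a j) {P : Matrix n n ℝ}
    (hP : P.PosDef) {R : ∀ j, Matrix (m j) (m j) ℝ} (hR : ∀ j, (R j).PosDef)
    (H : ∀ j, Matrix (m j) n ℝ) {K : Matrix n n ℝ} {L : ∀ j, Matrix n (m j) ℝ}
    (hunbiased : K + ∑ j, a j • (L j * H j) = 1) :
    (linearFusionCovariance a P R K L - (P⁻¹ + fusedInformation a H R)⁻¹).PosSemidef := by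
  set J := P⁻¹ + fusedInformation a H R
  have hJ : J.PosDef :=
    hP.inv.add_posSemidef (posSemidef_fusedInformation ha H fun j => (hR j).posSemidef)
  have hJS : J⁻¹ * J * J⁻¹ = J⁻¹ := by
    rw [nonsing_inv_mul _ ((isUnit_iff_isUnit_det J).mp hJ.isUnit), Matrix.one_mul]
  have hST : J⁻¹ᵀ = J⁻¹ := hJ.inv.isHermitian.transpose_eq
  -- the prior enters as one more sensor, with observation matrix `1`
  have hsquares : linearFusionCovariance a P R K L - J⁻¹ =
      (K - J⁻¹ * 1ᵀ * P⁻¹) * P * (K - J⁻¹ * 1ᵀ * P⁻¹)ᵀ +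
        ∑ j, a j • ((L j - J⁻¹ * (H j)ᵀ * (R j)⁻¹) * R j * (L j - J⁻¹ * (H j)ᵀ * (R j)⁻¹)ᵀ) := by
    simp only [sub_mul_mul_transpose_sub hP.isHermitian.transpose_eq hP.isUnit hST,
      sub_mul_mul_transpose_sub (hR _).isHermitian.transpose_eq (hR _).isUnit hST,
      ← linearFusionCovariance_sub_eq, hunbiased, Matrix.one_mul, hST]
    rw [show J⁻¹ * (P⁻¹ + fusedInformation a H R) * J⁻¹ = J⁻¹ from hJS]
    abel
  rw [hsquares]
  exact (hP.posSemidef.mul_mul_transpose_same _).add <| posSemidef_sum _ fun j _ =>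
    ((hR j).posSemidef.mul_mul_transpose_same _).smul (ha j)

end Fusion

theorem stmt1_general {n N : ℕ}
    (md : Fin N → ℕ)
    (H : ∀ j, Matrix (Fin (md j)) (Fin n) ℝ)
    (R Ru : ∀ j, Matrix (Fin (md j)) (Fin (md j)) ℝ)
    (hR : ∀ j, (R j).PosDef) (hRu : ∀ j, (Ru j).PosDef)
    (a : Fin N → ℝ) (ha : ∀ j, 0 ≤ a j)
    (P : Matrix (Fin n) (Fin n) ℝ) (hP : P.PosDef)
    (Pf : Matrix (Fin n) (Fin n) ℝ) (hPf : Pf.PosDef)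
    (Phif Phi Phit Phits : Matrix (Fin n) (Fin n) ℝ)
    (hPhif : Phif = ∑ j, a j • ((H j)ᵀ * (Ru j)⁻¹ * H j))
    (hPhi : Phi = ∑ j, a j • ((H j)ᵀ * (R j)⁻¹ * H j))
    (hPhit : Phit = ∑ j, (a j) ^ 2 • ((H j)ᵀ * (Ru j)⁻¹ * R j * (Ru j)⁻¹ * H j))
    (hPhits : Phits = ∑ j, ((a j) ^ 2 - a j) • ((H j)ᵀ * (Ru j)⁻¹ * R j * (Ru j)⁻¹ * H j))
    (Sig Sigf Sigt SigtTil Cbar Rts : Matrix (Fin n) (Fin n) ℝ)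
    (hSig : Sig = (P⁻¹ + Phi)⁻¹)
    (hSigf : Sigf = (Pf⁻¹ + Phif)⁻¹)
    (hSigt : Sigt = Sigf * Pf⁻¹ * P * Pf⁻¹ * Sigf + Sigf * Phit * Sigf)
    (hSigtTil : SigtTil = Sigf * Pf⁻¹ * P * Pf⁻¹ * Sigf +
      Sigf * (∑ j, a j • ((H j)ᵀ * (Ru j)⁻¹ * R j * (Ru j)⁻¹ * H j)) * Sigf)
    (hCbar : Cbar = (1 : Matrix (Fin n) (Fin n) ℝ) - Phif * Sigf)
    (hRts : Rts = Pf * Cbar * Phits * Cbarᵀ * Pfᵀ) :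
    Sigt - Sig = (SigtTil - Sig) + Rts ∧ (SigtTil - Sig).PosSemidef := by
  have hJf : (Pf⁻¹ + Phif).PosDef := hPf.inv.add_posSemidef <| hPhif ▸
    posSemidef_fusedInformation ha H fun j => (hRu j).posSemidef
  have hSigfT : Sigfᵀ = Sigf := hSigf ▸ hJf.inv.isHermitian.transpose_eq
  have hPfCbar : Pf * Cbar = Sigf := by
    rw [hCbar, hSigf]; exact mul_one_sub_mul_inv_inv_add hPf.isUnit hJf.isUnit
  have hRtsEq : Rts = Sigf * Phits * Sigf := by
    rw [hRts, Matrix.mul_assoc (Pf * Cbar * Phits), ← transpose_mul, hPfCbar, hSigfT]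
  have hPhitSplit : Phit = (∑ j, a j • ((H j)ᵀ * (Ru j)⁻¹ * R j * (Ru j)⁻¹ * H j)) + Phits := by
    rw [hPhit, hPhits, ← Finset.sum_add_distrib]
    exact Finset.sum_congr rfl fun j _ => by rw [← add_smul, add_sub_cancel]
  refine ⟨by rw [hSigt, hSigtTil, hPhitSplit, hRtsEq, Matrix.mul_add, Matrix.add_mul]; abel, ?_⟩
  have hunbiased : Sigf * Pf⁻¹ + ∑ j, a j • (Sigf * (H j)ᵀ * (Ru j)⁻¹ * H j) = 1 := by
    calc Sigf * Pf⁻¹ + ∑ j, a j • (Sigf * (H j)ᵀ * (Ru j)⁻¹ * H j) = Sigf * (Pf⁻¹ + Phif) := by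
          rw [Matrix.mul_add, hPhif, Finset.mul_sum]
          simp only [Matrix.mul_smul, Matrix.mul_assoc]
      _ = 1 := hSigf ▸ nonsing_inv_mul _ ((isUnit_iff_isUnit_det _).mp hJf.isUnit)
  have hSigtTilEq : SigtTil = linearFusionCovariance a P R (Sigf * Pf⁻¹)
      (fun j => Sigf * (H j)ᵀ * (Ru j)⁻¹) := by
    simp only [hSigtTil, linearFusionCovariance, transpose_mul, transpose_nonsing_inv, hSigfT,
      hPf.isHermitian.transpose_eq, (hRu _).isHermitian.transpose_eq,
      transpose_transpose, Finset.mul_sum, Finset.sum_mul, Matrix.mul_smul, Matrix.smul_mul,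
      Matrix.mul_assoc]
  rw [hSigtTilEq, hSig, hPhi]
  exact posSemidef_linearFusionCovariance_sub ha hP hR H hunbiased

/-- Proposition 1 of the paper: with
`Σ̃ᵗ = Σᶠ (Pᶠ)⁻¹ P (Pᶠ)⁻¹ Σᶠ + Σᶠ (∑ⱼ aⱼ Hⱼᵀ (Rⱼᵘ)⁻¹ Rⱼ (Rⱼᵘ)⁻¹ Hⱼ) Σᶠ`,
`C̄ = I − Φᶠ Σᶠ` and `Rᵗˢ = Pᶠ C̄ Φᵗˢ C̄ᵀ (Pᶠ)ᵀ`, one has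
`Σᵗ − Σ = (Σ̃ᵗ − Σ) + Rᵗˢ` and `Σ̃ᵗ − Σ ⪰ 0`. -/
theorem stmt1 {n N : ℕ} (hn : 1 ≤ n) (hN : 1 ≤ N)
    (md : Fin N → ℕ) (hmd : ∀ j, 1 ≤ md j)
    (H : ∀ j, Matrix (Fin (md j)) (Fin n) ℝ)
    (R Ru : ∀ j, Matrix (Fin (md j)) (Fin (md j)) ℝ)
    (hRsymm : ∀ j, (R j).IsSymm) (hRusymm : ∀ j, (Ru j).IsSymm)
    (hR : ∀ j, (R j).PosDef) (hRu : ∀ j, (Ru j).PosDef)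
    (a : Fin N → ℝ) (ha : ∀ j, 0 ≤ a j)
    (P dQ : Matrix (Fin n) (Fin n) ℝ) (hPsymm : P.IsSymm) (hP : P.PosDef)
    (hdQsymm : dQ.IsSymm)
    (Pf : Matrix (Fin n) (Fin n) ℝ) (hPfdef : Pf = P + dQ) (hPf : Pf.PosDef)
    (Phif Phi Phit Phits : Matrix (Fin n) (Fin n) ℝ)
    (hPhif : Phif = ∑ j, a j • ((H j)ᵀ * (Ru j)⁻¹ * H j))
    (hPhi : Phi = ∑ j, a j • ((H j)ᵀ * (R j)⁻¹ * H j))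
    (hPhit : Phit = ∑ j, (a j) ^ 2 • ((H j)ᵀ * (Ru j)⁻¹ * R j * (Ru j)⁻¹ * H j))
    (hPhits : Phits = ∑ j, ((a j) ^ 2 - a j) • ((H j)ᵀ * (Ru j)⁻¹ * R j * (Ru j)⁻¹ * H j))
    (Sig Sigf Sigt SigtTil Cbar Rts : Matrix (Fin n) (Fin n) ℝ)
    (hSig : Sig = (P⁻¹ + Phi)⁻¹)
    (hSigf : Sigf = (Pf⁻¹ + Phif)⁻¹)
    (hSigt : Sigt = Sigf * Pf⁻¹ * P * Pf⁻¹ * Sigf + Sigf * Phit * Sigf)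
    (hSigtTil : SigtTil = Sigf * Pf⁻¹ * P * Pf⁻¹ * Sigf +
      Sigf * (∑ j, a j • ((H j)ᵀ * (Ru j)⁻¹ * R j * (Ru j)⁻¹ * H j)) * Sigf)
    (hCbar : Cbar = (1 : Matrix (Fin n) (Fin n) ℝ) - Phif * Sigf)
    (hRts : Rts = Pf * Cbar * Phits * Cbarᵀ * Pfᵀ) :
    Sigt - Sig = (SigtTil - Sig) + Rts ∧ (SigtTil - Sig).PosSemidef :=
  stmt1_general md H R Ru hR hRu a ha P hP Pf hPf Phif Phi Phit Phits hPhif hPhi hPhit hPhits Sig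
    Sigf Sigt SigtTil Cbar Rts hSig hSigf hSigt hSigtTil hCbar hRts
end

section
/- Under the sensor setup and posterior definitions, with A = Σ^f (P^f)^{-1}, it holds that Σ^t − Σ^f = Σ^f (Φ^t − Φ^f) Σ^f − A ΔQ A^T. Moreover, Φ^t − Φ^f = Σ_{j=1}^N a_j H_j^T (R_j^u)^{-1} ((a_j − 1)·I_{m_j} − a_j ΔR_j (R_j^u)^{-1}) H_j. (Proposition 2 of the paper.) -/
/-!
With `K = (Pᶠ)⁻¹ + Φᶠ` and `Σᶠ = K⁻¹`, the identity `Σᶠ K Σᶠ = Σᶠ` gives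
`Σᶠ (Pᶠ)⁻¹ Σᶠ = Σᶠ − Σᶠ Φᶠ Σᶠ`; substituting `P = Pᶠ − ΔQ` into `Σᵗ` and writing
`Aᵀ = (Pᶠ)⁻¹ Σᶠ` by symmetry of `Pᶠ` and `Σᶠ` yields the first identity. The second is the
termwise expansion of `ΔRⱼ = Rⱼᵘ − Rⱼ`. The only property of matrix inversion used is
`M⁻¹ M M⁻¹ = M⁻¹`, which also holds for singular `M`, where Mathlib sets `M⁻¹ = 0`.
-/

open Matrix

namespace Matrix

variable {m n α : Type*} [CommRing α]

section Inverse

variable [Fintype n] [DecidableEq n]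

theorem inv_mul_self_mul_inv (M : Matrix n n α) : M⁻¹ * M * M⁻¹ = M⁻¹ := by
  by_cases h : IsUnit M.det
  · rw [nonsing_inv_mul M h, Matrix.one_mul]
  · simp [nonsing_inv_apply_not_isUnit M h]

theorem inv_add_mul_mul_inv_add (Q F : Matrix n n α) :
    (Q + F)⁻¹ * Q * (Q + F)⁻¹ = (Q + F)⁻¹ - (Q + F)⁻¹ * F * (Q + F)⁻¹ := by
  have h := inv_mul_self_mul_inv (Q + F)
  rw [Matrix.mul_add, Matrix.add_mul] at h
  exact eq_sub_of_add_eq h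

end Inverse

theorem IsSymm.transpose_mul_mul [Fintype m] {U : Matrix m m α} (hU : U.IsSymm) (H : Matrix m n α) :
    (Hᵀ * U * H).IsSymm := by
  rw [IsSymm, transpose_mul, transpose_mul, transpose_transpose, hU.eq, Matrix.mul_assoc]

theorem isSymm_sum {β ι : Type*} [AddCommMonoid β] (s : Finset ι) {M : ι → Matrix n n β}
    (hM : ∀ i ∈ s, (M i).IsSymm) : (∑ i ∈ s, M i).IsSymm :=
  Finset.sum_induction M IsSymm (fun _ _ => IsSymm.add) isSymm_zero hM

end Matrix

section InformationFusion

variable {m n α : Type*} [Fintype m] [DecidableEq m] [Fintype n] [DecidableEq n] [CommRing α]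

theorem fused_covariance_sub {Q D F T S : Matrix n n α} (hS : S = (Q⁻¹ + F)⁻¹) :
    S * Q⁻¹ * (Q - D) * Q⁻¹ * S + S * T * S - S
      = S * (T - F) * S - S * Q⁻¹ * D * (Q⁻¹ * S) := by
  have hQ : Q⁻¹ * (Q * (Q⁻¹ * S)) = Q⁻¹ * S := by
    rw [← Matrix.mul_assoc, ← Matrix.mul_assoc, inv_mul_self_mul_inv]
  have hSQS : S * (Q⁻¹ * S) = S - S * (F * S) := by
    subst hS
    simpa only [Matrix.mul_assoc] using inv_add_mul_mul_inv_add Q⁻¹ F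
  simp only [Matrix.mul_sub, Matrix.sub_mul, hQ, hSQS, Matrix.mul_assoc]
  abel

omit [Fintype n] [DecidableEq n] in
theorem sensor_information_sub (a : α) (H : Matrix m n α) (R U : Matrix m m α) :
    a ^ 2 • (Hᵀ * U⁻¹ * R * U⁻¹ * H) - a • (Hᵀ * U⁻¹ * H)
      = a • (Hᵀ * U⁻¹ * ((a - 1) • (1 : Matrix m m α) - a • ((U - R) * U⁻¹)) * H) := by
  have hU : U⁻¹ * (U * (U⁻¹ * H)) = U⁻¹ * H := by
    rw [← Matrix.mul_assoc, ← Matrix.mul_assoc, inv_mul_self_mul_inv]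
  simp only [Matrix.sub_mul, Matrix.mul_sub, Matrix.mul_smul, Matrix.smul_mul, Matrix.mul_one,
    Matrix.mul_assoc, hU, smul_sub, smul_smul]
  module

end InformationFusion

theorem stmt2_general {n N : ℕ}
    (md : Fin N → ℕ)
    (H : ∀ j, Matrix (Fin (md j)) (Fin n) ℝ)
    (R Ru : ∀ j, Matrix (Fin (md j)) (Fin (md j)) ℝ)
    (hRusymm : ∀ j, (Ru j).IsSymm)
    (dR : ∀ j, Matrix (Fin (md j)) (Fin (md j)) ℝ)
    (hdR : ∀ j, dR j = Ru j - R j)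
    (a : Fin N → ℝ)
    (P dQ : Matrix (Fin n) (Fin n) ℝ) (hPsymm : P.IsSymm)
    (hdQsymm : dQ.IsSymm)
    (Pf : Matrix (Fin n) (Fin n) ℝ) (hPfdef : Pf = P + dQ)
    (Phif Phit : Matrix (Fin n) (Fin n) ℝ)
    (hPhif : Phif = ∑ j, a j • ((H j)ᵀ * (Ru j)⁻¹ * H j))
    (hPhit : Phit = ∑ j, (a j) ^ 2 • ((H j)ᵀ * (Ru j)⁻¹ * R j * (Ru j)⁻¹ * H j))
    (Sigf Sigt A : Matrix (Fin n) (Fin n) ℝ)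
    (hSigf : Sigf = (Pf⁻¹ + Phif)⁻¹)
    (hSigt : Sigt = Sigf * Pf⁻¹ * P * Pf⁻¹ * Sigf + Sigf * Phit * Sigf)
    (hA : A = Sigf * Pf⁻¹) :
    Sigt - Sigf = Sigf * (Phit - Phif) * Sigf - A * dQ * Aᵀ ∧
    Phit - Phif = ∑ j, a j • ((H j)ᵀ * (Ru j)⁻¹ *
      ((a j - 1) • (1 : Matrix (Fin (md j)) (Fin (md j)) ℝ) - a j • (dR j * (Ru j)⁻¹)) * H j) := by
  have hPfinv : (Pf⁻¹).IsSymm := (hPfdef ▸ hPsymm.add hdQsymm).inv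
  have hPhifsymm : Phif.IsSymm :=
    hPhif ▸ isSymm_sum _ fun j _ => ((hRusymm j).inv.transpose_mul_mul (H j)).smul (a j)
  have hSigfsymm : Sigf.IsSymm := hSigf ▸ (hPfinv.add hPhifsymm).inv
  have hAT : Aᵀ = Pf⁻¹ * Sigf := by rw [hA, transpose_mul, hPfinv.eq, hSigfsymm.eq]
  refine ⟨?_, ?_⟩
  · rw [hSigt, hAT, hA, show P = Pf - dQ by rw [hPfdef, add_sub_cancel_right]]
    exact fused_covariance_sub hSigf
  · rw [hPhit, hPhif, ← Finset.sum_sub_distrib]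
    exact Finset.sum_congr rfl fun j _ => hdR j ▸ sensor_information_sub _ _ _ _

/-- Proposition 2 of the paper: with `A = Σᶠ (Pᶠ)⁻¹`,
`Σᵗ − Σᶠ = Σᶠ (Φᵗ − Φᶠ) Σᶠ − A ΔQ Aᵀ`, and
`Φᵗ − Φᶠ = ∑ⱼ aⱼ Hⱼᵀ (Rⱼᵘ)⁻¹ ((aⱼ−1) I − aⱼ ΔRⱼ (Rⱼᵘ)⁻¹) Hⱼ`. -/
theorem stmt2 {n N : ℕ} (hn : 1 ≤ n) (hN : 1 ≤ N)
    (md : Fin N → ℕ) (hmd : ∀ j, 1 ≤ md j)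
    (H : ∀ j, Matrix (Fin (md j)) (Fin n) ℝ)
    (R Ru : ∀ j, Matrix (Fin (md j)) (Fin (md j)) ℝ)
    (hRsymm : ∀ j, (R j).IsSymm) (hRusymm : ∀ j, (Ru j).IsSymm)
    (hR : ∀ j, (R j).PosDef) (hRu : ∀ j, (Ru j).PosDef)
    (dR : ∀ j, Matrix (Fin (md j)) (Fin (md j)) ℝ)
    (hdR : ∀ j, dR j = Ru j - R j)
    (a : Fin N → ℝ) (ha : ∀ j, 0 ≤ a j)
    (P dQ : Matrix (Fin n) (Fin n) ℝ) (hPsymm : P.IsSymm) (hP : P.PosDef)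
    (hdQsymm : dQ.IsSymm)
    (Pf : Matrix (Fin n) (Fin n) ℝ) (hPfdef : Pf = P + dQ) (hPf : Pf.PosDef)
    (Phif Phi Phit : Matrix (Fin n) (Fin n) ℝ)
    (hPhif : Phif = ∑ j, a j • ((H j)ᵀ * (Ru j)⁻¹ * H j))
    (hPhi : Phi = ∑ j, a j • ((H j)ᵀ * (R j)⁻¹ * H j))
    (hPhit : Phit = ∑ j, (a j) ^ 2 • ((H j)ᵀ * (Ru j)⁻¹ * R j * (Ru j)⁻¹ * H j))
    (Sig Sigf Sigt A : Matrix (Fin n) (Fin n) ℝ)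
    (hSig : Sig = (P⁻¹ + Phi)⁻¹)
    (hSigf : Sigf = (Pf⁻¹ + Phif)⁻¹)
    (hSigt : Sigt = Sigf * Pf⁻¹ * P * Pf⁻¹ * Sigf + Sigf * Phit * Sigf)
    (hA : A = Sigf * Pf⁻¹) :
    Sigt - Sigf = Sigf * (Phit - Phif) * Sigf - A * dQ * Aᵀ ∧
    Phit - Phif = ∑ j, a j • ((H j)ᵀ * (Ru j)⁻¹ *
      ((a j - 1) • (1 : Matrix (Fin (md j)) (Fin (md j)) ℝ) - a j • (dR j * (Ru j)⁻¹)) * H j) :=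
  stmt2_general md H R Ru hRusymm dR hdR a P dQ hPsymm hdQsymm Pf hPfdef Phif Phit hPhif hPhit Sigf
    Sigt A hSigf hSigt hA
end

section
/- Single-sensor case (N = 1): let H be a real m×n matrix, let R and R^u be real symmetric positive definite m×m matrices, and let P and P^f be real symmetric positive definite n×n matrices. Define Σ = (P^{-1} + H^T R^{-1} H)^{-1}, Σ^f = ((P^f)^{-1} + H^T (R^u)^{-1} H)^{-1}, and Σ^t = Σ^f (P^f)^{-1} P (P^f)^{-1} Σ^f + Σ^f H^T (R^u)^{-1} R (R^u)^{-1} H Σ^f. Then Σ^t ⪰ Σ, i.e., Σ^t − Σ is positive semidefinite. (Proposition 4 of the paper: for a single sensor the estimation error covariance dominates the standard performance evaluation index under any mismatched noise covariances.) -/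
open Matrix

/-- Proposition 4 of the paper (single-sensor case): with
`Σ = (P⁻¹ + Hᵀ R⁻¹ H)⁻¹`, `Σᶠ = ((Pᶠ)⁻¹ + Hᵀ (Rᵘ)⁻¹ H)⁻¹` and
`Σᵗ = Σᶠ (Pᶠ)⁻¹ P (Pᶠ)⁻¹ Σᶠ + Σᶠ Hᵀ (Rᵘ)⁻¹ R (Rᵘ)⁻¹ H Σᶠ`,
one has `Σᵗ ⪰ Σ`. -/
theorem stmt4 {n m : ℕ} (hn : 1 ≤ n) (hm : 1 ≤ m)
    (H : Matrix (Fin m) (Fin n) ℝ)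
    (R Ru : Matrix (Fin m) (Fin m) ℝ)
    (hRsymm : R.IsSymm) (hRusymm : Ru.IsSymm)
    (hR : R.PosDef) (hRu : Ru.PosDef)
    (P Pf : Matrix (Fin n) (Fin n) ℝ)
    (hPsymm : P.IsSymm) (hPfsymm : Pf.IsSymm)
    (hP : P.PosDef) (hPf : Pf.PosDef)
    (Sig Sigf Sigt : Matrix (Fin n) (Fin n) ℝ)
    (hSig : Sig = (P⁻¹ + Hᵀ * R⁻¹ * H)⁻¹)
    (hSigf : Sigf = (Pf⁻¹ + Hᵀ * Ru⁻¹ * H)⁻¹)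
    (hSigt : Sigt = Sigf * Pf⁻¹ * P * Pf⁻¹ * Sigf + Sigf * Hᵀ * Ru⁻¹ * R * Ru⁻¹ * H * Sigf) :
    (Sigt - Sig).PosSemidef := by
  -- conjugation preserves PSD (real case)
  have hconj : ∀ (M : Matrix (Fin m) (Fin m) ℝ), M.PosSemidef → (Hᵀ * M * H).PosSemidef := by
    intro M hM
    simpa [conjTranspose_eq_transpose_of_trivial] using hM.conjTranspose_mul_mul_same H
  have hA : (P⁻¹ + Hᵀ * R⁻¹ * H).PosDef := hP.inv.add_posSemidef (hconj _ hR.inv.posSemidef)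
  have hB : (Pf⁻¹ + Hᵀ * Ru⁻¹ * H).PosDef := hPf.inv.add_posSemidef (hconj _ hRu.inv.posSemidef)
  have hAdet : IsUnit (P⁻¹ + Hᵀ * R⁻¹ * H).det := hA.det_pos.ne'.isUnit
  have hBdet : IsUnit (Pf⁻¹ + Hᵀ * Ru⁻¹ * H).det := hB.det_pos.ne'.isUnit
  have hPdet : IsUnit P.det := hP.det_pos.ne'.isUnit
  have hRdet : IsUnit R.det := hR.det_pos.ne'.isUnit
  -- inverse identities
  have hAS : (P⁻¹ + Hᵀ * R⁻¹ * H) * Sig = 1 := by rw [hSig]; exact mul_nonsing_inv _ hAdet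
  have hSfB : Sigf * (Pf⁻¹ + Hᵀ * Ru⁻¹ * H) = 1 := by rw [hSigf]; exact nonsing_inv_mul _ hBdet
  have hBSf : (Pf⁻¹ + Hᵀ * Ru⁻¹ * H) * Sigf = 1 := by rw [hSigf]; exact mul_nonsing_inv _ hBdet
  -- symmetry facts
  have hPiT : (P⁻¹)ᵀ = P⁻¹ := by rw [transpose_nonsing_inv, hPsymm.eq]
  have hPfiT : (Pf⁻¹)ᵀ = Pf⁻¹ := by rw [transpose_nonsing_inv, hPfsymm.eq]
  have hRiT : (R⁻¹)ᵀ = R⁻¹ := by rw [transpose_nonsing_inv, hRsymm.eq]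
  have hRuiT : (Ru⁻¹)ᵀ = Ru⁻¹ := by rw [transpose_nonsing_inv, hRusymm.eq]
  have hSigT : Sigᵀ = Sig := by
    rw [hSig, transpose_nonsing_inv]
    congr 1
    simp [transpose_add, transpose_mul, hPiT, hRiT, Matrix.mul_assoc]
  have hSigfT : Sigfᵀ = Sigf := by
    rw [hSigf, transpose_nonsing_inv]
    congr 1
    simp [transpose_add, transpose_mul, hPfiT, hRuiT, Matrix.mul_assoc]
  -- cross identities
  have c1 : Sigf * (Pf⁻¹ * Sig) + Sigf * (Hᵀ * (Ru⁻¹ * (H * Sig))) = Sig := by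
    have h0 := congrArg (· * Sig) hSfB
    simpa only [Matrix.add_mul, Matrix.mul_add, Matrix.one_mul, Matrix.mul_assoc] using h0
  have c2 : Sig * (Pf⁻¹ * Sigf) + Sig * (Hᵀ * (Ru⁻¹ * (H * Sigf))) = Sig := by
    have h0 := congrArg (Sig * ·) hBSf
    simpa only [Matrix.add_mul, Matrix.mul_add, Matrix.mul_one, Matrix.mul_assoc] using h0
  have c3 : Sig * (P⁻¹ * Sig) + Sig * (Hᵀ * (R⁻¹ * (H * Sig))) = Sig := by
    have h0 := congrArg (Sig * ·) hAS
    simpa only [Matrix.add_mul, Matrix.mul_add, Matrix.mul_one, Matrix.mul_assoc] using h0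
  -- key decomposition
  have key : Sigt - Sig =
      (Sigf * Pf⁻¹ - Sig * P⁻¹) * P * (Sigf * Pf⁻¹ - Sig * P⁻¹)ᵀ +
      (Sigf * (Hᵀ * Ru⁻¹) - Sig * (Hᵀ * R⁻¹)) * R *
        (Sigf * (Hᵀ * Ru⁻¹) - Sig * (Hᵀ * R⁻¹))ᵀ := by
    have hE1T : (Sigf * Pf⁻¹ - Sig * P⁻¹)ᵀ = Pf⁻¹ * Sigf - P⁻¹ * Sig := by
      simp [transpose_sub, transpose_mul, hPiT, hPfiT, hSigT, hSigfT]
    have hE2T : (Sigf * (Hᵀ * Ru⁻¹) - Sig * (Hᵀ * R⁻¹))ᵀ =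
        Ru⁻¹ * (H * Sigf) - R⁻¹ * (H * Sig) := by
      simp [transpose_sub, transpose_mul, hRiT, hRuiT, hSigT, hSigfT, Matrix.mul_assoc]
    rw [hE1T, hE2T, hSigt]
    simp only [Matrix.sub_mul, Matrix.mul_sub, Matrix.mul_assoc,
      Matrix.mul_nonsing_inv_cancel_left (h := hPdet),
      Matrix.nonsing_inv_mul_cancel_left (h := hPdet),
      Matrix.mul_nonsing_inv_cancel_left (h := hRdet),
      Matrix.nonsing_inv_mul_cancel_left (h := hRdet)]
    linear_combination (norm := abel1) c1 + c2 - c3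
  rw [key]
  have h1 : ((Sigf * Pf⁻¹ - Sig * P⁻¹) * P *
      (Sigf * Pf⁻¹ - Sig * P⁻¹)ᴴ).PosSemidef :=
    hP.posSemidef.mul_mul_conjTranspose_same _
  have h2 : ((Sigf * (Hᵀ * Ru⁻¹) - Sig * (Hᵀ * R⁻¹)) * R *
      (Sigf * (Hᵀ * Ru⁻¹) - Sig * (Hᵀ * R⁻¹))ᴴ).PosSemidef :=
    hR.posSemidef.mul_mul_conjTranspose_same _
  rw [conjTranspose_eq_transpose_of_trivial] at h1 h2
  exact h1.add h2
end

section
/- Let 𝓛 be an N×N real symmetric doubly stochastic matrix (all entries nonnegative, every row sum equal to 1) with all diagonal entries positive, whose associated graph (an edge between i and j whenever 𝓛_{ij} > 0) is connected. For each integer m ≥ 1 define the N×N matrix 𝓛̄^m with entries [𝓛̄^m]_{ij} = (N·[𝓛^m]_{ij})^2 − N·[𝓛^m]_{ij}, where [𝓛^m]_{ij} is the (i,j) entry of the m-th power of 𝓛. Then 𝓛̄^m converges to the zero matrix exponentially fast as m → ∞: there exist a constant c ≥ 0 and a real number r with 0 ≤ r < 1 such that |[𝓛̄^m]_{ij}|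 ≤ c·r^m for all m ≥ 1 and all i, j. (Proposition 5 of the paper.) -/
open Matrix Finset

section Aux

variable {N : ℕ} {W : Matrix (Fin N) (Fin N) ℝ}

lemma powEntryNonneg (hnonneg : ∀ i j, 0 ≤ W i j) :
    ∀ m i j, 0 ≤ (W ^ m) i j := by
  intro m
  induction m with
  | zero =>
      intro i j
      simp only [pow_zero, Matrix.one_apply]
      split <;> norm_num
  | succ m ih =>
      intro i j
      rw [pow_succ, Matrix.mul_apply]
      exact Finset.sum_nonneg fun k _ => mul_nonneg (ih i k) (hnonneg k j)

lemma powRowSum (hrow : ∀ i, ∑ j, W i j = 1) :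
    ∀ m i, ∑ j, (W ^ m) i j = 1 := by
  intro m
  induction m with
  | zero =>
      intro i
      simp [Matrix.one_apply]
  | succ m ih =>
      intro i
      simp only [pow_succ, Matrix.mul_apply]
      rw [Finset.sum_comm]
      simp only [← Finset.mul_sum, hrow]
      simpa using ih i

lemma powEntryLeOne (hnonneg : ∀ i j, 0 ≤ W i j) (hrow : ∀ i, ∑ j, W i j = 1)
    (m : ℕ) (i j : Fin N) : (W ^ m) i j ≤ 1 := by
  have h := powRowSum hrow m i
  calc (W ^ m) i j ≤ ∑ k, (W ^ m) i k :=
        Finset.single_le_sum (fun k _ => powEntryNonneg hnonneg m i k) (Finset.mem_univ j)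
    _ = 1 := h

lemma powPosPersist (hnonneg : ∀ i j, 0 ≤ W i j) (hdiag : ∀ i, 0 < W i i)
    {m m' : ℕ} (hmm : m ≤ m') {i j : Fin N} (h : 0 < (W ^ m) i j) :
    0 < (W ^ m') i j := by
  induction m' , hmm using Nat.le_induction with
  | base => exact h
  | succ n hn ih =>
      rw [pow_succ, Matrix.mul_apply]
      have hle : (W ^ n) i j * W j j ≤ ∑ k, (W ^ n) i k * W k j :=
        Finset.single_le_sum
          (f := fun k => (W ^ n) i k * W k j)
          (fun k _ => mul_nonneg (powEntryNonneg hnonneg n i k) (hnonneg k j))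
          (Finset.mem_univ j)
      exact lt_of_lt_of_le (mul_pos ih (hdiag j)) hle

end Aux

/-- Proposition 5 of the paper: for a symmetric doubly stochastic matrix `𝓛` with
positive diagonal entries and connected associated graph, the matrix with entries
`(N [𝓛^m]_{ij})² − N [𝓛^m]_{ij}` converges to zero exponentially as `m → ∞`. -/
theorem stmt5 {N : ℕ} (hN : 1 ≤ N) (W : Matrix (Fin N) (Fin N) ℝ)
    (hsymm : W.IsSymm)
    (hnonneg : ∀ i j, 0 ≤ W i j)
    (hrow : ∀ i, ∑ j, W i j = 1)
    (hdiag : ∀ i, 0 < W i i)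
    (hconn : ∀ i j, ∃ m : ℕ, 0 < (W ^ m) i j) :
    ∃ c : ℝ, 0 ≤ c ∧ ∃ r : ℝ, 0 ≤ r ∧ r < 1 ∧
      ∀ m : ℕ, 1 ≤ m → ∀ i j,
        |((N : ℝ) * (W ^ m) i j) ^ 2 - (N : ℝ) * (W ^ m) i j| ≤ c * r ^ m := by
  haveI : NeZero N := ⟨by omega⟩
  have hne : (Finset.univ : Finset (Fin N)).Nonempty := Finset.univ_nonempty
  have hne2 : (Finset.univ : Finset (Fin N × Fin N)).Nonempty := Finset.univ_nonempty
  -- column sums of powers are 1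
  have hcol : ∀ m j, ∑ i, (W ^ m) i j = 1 := by
    intro m j
    have hs := hsymm.pow m
    calc ∑ i, (W ^ m) i j = ∑ i, (W ^ m) j i := by
          refine Finset.sum_congr rfl fun i _ => ?_
          exact (hs.apply i j).symm
      _ = 1 := powRowSum hrow m j
  -- a power with all entries positive
  choose f hf using hconn
  set M : ℕ := (Finset.univ.sup fun p : Fin N × Fin N => f p.1 p.2) + 1 with hM
  have hMpos : 0 < M := Nat.succ_pos _
  have hWM : ∀ i j, 0 < (W ^ M) i j := by
    intro i j
    refine powPosPersist hnonneg hdiag ?_ (hf i j)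
    calc f i j ≤ Finset.univ.sup (fun p : Fin N × Fin N => f p.1 p.2) :=
          Finset.le_sup (f := fun p : Fin N × Fin N => f p.1 p.2) (Finset.mem_univ (i, j))
      _ ≤ M := Nat.le_succ _
  -- minimal entry of W ^ M
  set δ : ℝ := Finset.univ.inf' hne2 (fun p : Fin N × Fin N => (W ^ M) p.1 p.2) with hδ
  have hδpos : 0 < δ := by
    obtain ⟨p, -, hp⟩ := Finset.exists_mem_eq_inf' hne2
      (fun p : Fin N × Fin N => (W ^ M) p.1 p.2)
    rw [hδ, hp]; exact hWM p.1 p.2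
  have hδle : ∀ i j, δ ≤ (W ^ M) i j := fun i j =>
    Finset.inf'_le (fun p : Fin N × Fin N => (W ^ M) p.1 p.2) (Finset.mem_univ (i, j))
  have hNδ : (N : ℝ) * δ ≤ 1 := by
    obtain ⟨i0⟩ : Nonempty (Fin N) := inferInstance
    calc (N : ℝ) * δ = ∑ _j : Fin N, δ := by
          rw [Finset.sum_const, Finset.card_univ, Fintype.card_fin, nsmul_eq_mul]
      _ ≤ ∑ j, (W ^ M) i0 j := Finset.sum_le_sum fun j _ => hδle i0 j
      _ = 1 := powRowSum hrow M i0
  set θ : ℝ := 1 - (N : ℝ) * δ with hθ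
  have hθ0 : 0 ≤ θ := by rw [hθ]; linarith
  have hθ1 : θ < 1 := by
    have : 0 < (N : ℝ) * δ := by
      have : (0:ℝ) < N := by exact_mod_cast Nat.pos_of_ne_zero (NeZero.ne N)
      positivity
    rw [hθ]; linarith
  -- oscillation of column j at time m
  set osc : ℕ → Fin N → ℝ := fun m j =>
    Finset.univ.sup' hne (fun i => (W ^ m) i j)
      - Finset.univ.inf' hne (fun i => (W ^ m) i j) with hosc
  -- key contraction estimate
  have key : ∀ (s m : ℕ) (δ' : ℝ), (∀ i j, δ' ≤ (W ^ s) i j) →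
      ∀ j, osc (s + m) j ≤ (1 - (N : ℝ) * δ') * osc m j := by
    intro s m δ' hδ' j
    set x : Fin N → ℝ := fun k => (W ^ m) k j with hx
    set P : Matrix (Fin N) (Fin N) ℝ := W ^ s with hP
    set su : ℝ := Finset.univ.sup' hne x with hsu
    set iu : ℝ := Finset.univ.inf' hne x with hiu
    have hentry : ∀ i, (W ^ (s + m)) i j = ∑ t, P i t * x t := by
      intro i; rw [pow_add, Matrix.mul_apply]
    have hsuiu : iu ≤ su := by
      obtain ⟨i0⟩ : Nonempty (Fin N) := inferInstance
      exact le_trans (Finset.inf'_le x (Finset.mem_univ i0))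
        (Finset.le_sup' x (Finset.mem_univ i0))
    have claim : ∀ i k, (∑ t, P i t * x t) - (∑ t, P k t * x t)
        ≤ (1 - (N : ℝ) * δ') * (su - iu) := by
      intro i k
      set q : Fin N → ℝ := fun t => min (P i t) (P k t) with hq
      set S : ℝ := ∑ t, q t with hS
      have hrowP : ∀ a, ∑ t, P a t = 1 := powRowSum hrow s
      have hsum_i : ∑ t, (P i t - q t) = 1 - S := by
        rw [Finset.sum_sub_distrib, hrowP, hS]
      have hsum_k : ∑ t, (P k t - q t) = 1 - S := by
        rw [Finset.sum_sub_distrib, hrowP, hS]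
      have h1 : ∑ t, (P i t - q t) * x t ≤ (1 - S) * su := by
        rw [← hsum_i, Finset.sum_mul]
        refine Finset.sum_le_sum fun t _ => ?_
        exact mul_le_mul_of_nonneg_left (Finset.le_sup' x (Finset.mem_univ t))
          (by simp [hq, sub_nonneg, min_le_left])
      have h2 : (1 - S) * iu ≤ ∑ t, (P k t - q t) * x t := by
        rw [← hsum_k, Finset.sum_mul]
        refine Finset.sum_le_sum fun t _ => ?_
        exact mul_le_mul_of_nonneg_left (Finset.inf'_le x (Finset.mem_univ t))
          (by simp [hq, sub_nonneg, min_le_right])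
      have hSδ : (N : ℝ) * δ' ≤ S := by
        calc (N : ℝ) * δ' = ∑ _t : Fin N, δ' := by
              rw [Finset.sum_const, Finset.card_univ, Fintype.card_fin, nsmul_eq_mul]
          _ ≤ S := Finset.sum_le_sum fun t _ => le_min (hδ' i t) (hδ' k t)
      have heq : (∑ t, P i t * x t) - (∑ t, P k t * x t)
          = (∑ t, (P i t - q t) * x t) - (∑ t, (P k t - q t) * x t) := by
        simp only [sub_mul, Finset.sum_sub_distrib]
        ring
      rw [heq]
      calc (∑ t, (P i t - q t) * x t) - (∑ t, (P k t - q t) * x t)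
          ≤ (1 - S) * su - (1 - S) * iu := by linarith
        _ = (1 - S) * (su - iu) := by ring
        _ ≤ (1 - (N : ℝ) * δ') * (su - iu) := by
            exact mul_le_mul_of_nonneg_right (by linarith) (by linarith)
    obtain ⟨i1, -, hi1⟩ := Finset.exists_mem_eq_sup' hne (fun i => (W ^ (s + m)) i j)
    obtain ⟨i2, -, hi2⟩ := Finset.exists_mem_eq_inf' hne (fun i => (W ^ (s + m)) i j)
    have : osc (s + m) j = (∑ t, P i1 t * x t) - (∑ t, P i2 t * x t) := by
      simp only [hosc]
      rw [hi1, hi2, hentry, hentry]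
    rw [this]
    have hoscm : osc m j = su - iu := rfl
    rw [hoscm] at *
    exact claim i1 i2
  -- oscillation bounded by 1
  have hosc01 : ∀ m j, 0 ≤ osc m j ∧ osc m j ≤ 1 := by
    intro m j
    obtain ⟨i1, -, hi1⟩ := Finset.exists_mem_eq_sup' hne (fun i => (W ^ m) i j)
    obtain ⟨i2, -, hi2⟩ := Finset.exists_mem_eq_inf' hne (fun i => (W ^ m) i j)
    have ha : (Finset.univ.inf' hne fun i => (W ^ m) i j)
        ≤ Finset.univ.sup' hne fun i => (W ^ m) i j := by
      rw [hi1]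
      exact Finset.inf'_le (fun i => (W ^ m) i j) (Finset.mem_univ i1)
    have h1 : (Finset.univ.sup' hne fun i => (W ^ m) i j) ≤ 1 := by
      rw [hi1]; exact powEntryLeOne hnonneg hrow m i1 j
    have h2 : 0 ≤ Finset.univ.inf' hne fun i => (W ^ m) i j := by
      rw [hi2]; exact powEntryNonneg hnonneg m i2 j
    constructor
    · simp only [hosc]; linarith
    · simp only [hosc]; linarith
  -- geometric decay along multiples of M
  have dec : ∀ (q t : ℕ) (j : Fin N), osc (M * q + t) j ≤ θ ^ q * osc t j := by
    intro q
    induction q with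
    | zero => intro t j; simp
    | succ q ih =>
        intro t j
        have h1 : M * (q + 1) + t = M + (M * q + t) := by ring
        rw [h1]
        calc osc (M + (M * q + t)) j ≤ θ * osc (M * q + t) j := key M (M * q + t) δ hδle j
          _ ≤ θ * (θ ^ q * osc t j) :=
              mul_le_mul_of_nonneg_left (ih t j) hθ0
          _ = θ ^ (q + 1) * osc t j := by ring
  have oscbound : ∀ m j, osc m j ≤ θ ^ (m / M) := by
    intro m j
    have h1 : M * (m / M) + m % M = m := Nat.div_add_mod m M
    calc osc m j = osc (M * (m / M) + m % M) j := by rw [h1]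
      _ ≤ θ ^ (m / M) * osc (m % M) j := dec (m / M) (m % M) j
      _ ≤ θ ^ (m / M) * 1 :=
          mul_le_mul_of_nonneg_left (hosc01 (m % M) j).2 (pow_nonneg hθ0 _)
      _ = θ ^ (m / M) := mul_one _
  -- choose the rate
  set ρ : ℝ := max θ (1/2) with hρ
  have hρ0 : 0 < ρ := lt_of_lt_of_le (by norm_num) (le_max_right _ _)
  have hρ1 : ρ < 1 := max_lt hθ1 (by norm_num)
  set r : ℝ := ρ ^ ((M : ℝ)⁻¹) with hr
  have hr0 : 0 < r := Real.rpow_pos_of_pos hρ0 _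
  have hr1 : r < 1 := Real.rpow_lt_one hρ0.le hρ1 (by positivity)
  have hrM : r ^ M = ρ := by
    rw [hr, ← Real.rpow_natCast (ρ ^ ((M : ℝ)⁻¹)) M, ← Real.rpow_mul hρ0.le]
    rw [inv_mul_cancel₀ (by exact_mod_cast hMpos.ne')]
    exact Real.rpow_one ρ
  -- θ ^ (m / M) ≤ 2 * r ^ m
  have hgeo : ∀ m : ℕ, θ ^ (m / M) ≤ 2 * r ^ m := by
    intro m
    have h1 : θ ^ (m / M) ≤ ρ ^ (m / M) :=
      pow_le_pow_left₀ hθ0 (le_max_left _ _) _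
    have h2 : ρ ^ (m / M) = r ^ (M * (m / M)) := by
      rw [pow_mul, hrM]
    have h3 : m ≤ M * (m / M) + M := by
      have := Nat.div_add_mod m M
      have := Nat.mod_lt m hMpos
      omega
    have h4 : r ^ (M * (m / M) + M) ≤ r ^ m :=
      pow_le_pow_of_le_one hr0.le hr1.le h3
    have h5 : r ^ (M * (m / M)) * ρ ≤ r ^ m := by
      rw [← hrM, ← pow_add]; exact h4
    have h6 : r ^ (M * (m / M)) ≤ r ^ m / ρ := by
      rw [le_div_iff₀ hρ0]; exact h5
    have h7 : r ^ m / ρ ≤ 2 * r ^ m := by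
      rw [div_le_iff₀ hρ0]
      have hhalf : (1:ℝ)/2 ≤ ρ := le_max_right _ _
      nlinarith [pow_nonneg hr0.le m]
    calc θ ^ (m / M) ≤ ρ ^ (m / M) := h1
      _ = r ^ (M * (m / M)) := h2
      _ ≤ r ^ m / ρ := h6
      _ ≤ 2 * r ^ m := h7
  -- conclude
  refine ⟨2 * (N : ℝ) ^ 2, by positivity, r, hr0.le, hr1, ?_⟩
  intro m hm i j
  set x : ℝ := (W ^ m) i j with hxdef
  have hx0 : 0 ≤ x := powEntryNonneg hnonneg m i j
  have hx1 : x ≤ 1 := powEntryLeOne hnonneg hrow m i j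
  -- 1/N and x both lie between inf and sup of the column
  set su : ℝ := Finset.univ.sup' hne (fun k => (W ^ m) k j) with hsu
  set iu : ℝ := Finset.univ.inf' hne (fun k => (W ^ m) k j) with hiu
  have hxsu : x ≤ su := Finset.le_sup' (fun k => (W ^ m) k j) (Finset.mem_univ i)
  have hxiu : iu ≤ x := Finset.inf'_le (fun k => (W ^ m) k j) (Finset.mem_univ i)
  have hNpos : (0:ℝ) < N := by exact_mod_cast Nat.pos_of_ne_zero (NeZero.ne N)
  have hsum : ∑ k, (W ^ m) k j = 1 := hcol m j
  have hsuN : 1 ≤ (N : ℝ) * su := by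
    calc (1:ℝ) = ∑ k, (W ^ m) k j := hsum.symm
      _ ≤ ∑ _k : Fin N, su := Finset.sum_le_sum fun k _ =>
          Finset.le_sup' (fun k => (W ^ m) k j) (Finset.mem_univ k)
      _ = (N : ℝ) * su := by
          rw [Finset.sum_const, Finset.card_univ, Fintype.card_fin, nsmul_eq_mul]
  have hiuN : (N : ℝ) * iu ≤ 1 := by
    calc (N : ℝ) * iu = ∑ _k : Fin N, iu := by
          rw [Finset.sum_const, Finset.card_univ, Fintype.card_fin, nsmul_eq_mul]
      _ ≤ ∑ k, (W ^ m) k j := Finset.sum_le_sum fun k _ =>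
          Finset.inf'_le (fun k => (W ^ m) k j) (Finset.mem_univ k)
      _ = 1 := hsum
  have hoscm : osc m j = su - iu := rfl
  have hosc2 : osc m j ≤ 2 * r ^ m := le_trans (oscbound m j) (hgeo m)
  -- |N x - 1| ≤ N * osc
  have hdist : |(N : ℝ) * x - 1| ≤ (N : ℝ) * (su - iu) := by
    rw [abs_le]
    constructor
    · have : (N : ℝ) * iu ≤ (N : ℝ) * x := mul_le_mul_of_nonneg_left hxiu hNpos.le
      nlinarith
    · have : (N : ℝ) * x ≤ (N : ℝ) * su := mul_le_mul_of_nonneg_left hxsu hNpos.le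
      nlinarith
  have hfact : ((N : ℝ) * x) ^ 2 - (N : ℝ) * x = ((N : ℝ) * x) * ((N : ℝ) * x - 1) := by
    ring
  calc |((N : ℝ) * x) ^ 2 - (N : ℝ) * x|
      = |(N : ℝ) * x| * |(N : ℝ) * x - 1| := by rw [hfact, abs_mul]
    _ ≤ (N : ℝ) * ((N : ℝ) * (su - iu)) := by
        refine mul_le_mul ?_ hdist (abs_nonneg _) hNpos.le
        rw [abs_of_nonneg (by positivity)]
        nlinarith
    _ = (N : ℝ) ^ 2 * (osc m j) := by rw [hoscm]; ring
    _ ≤ (N : ℝ) ^ 2 * (2 * r ^ m) :=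
        mul_le_mul_of_nonneg_left hosc2 (by positivity)
    _ = 2 * (N : ℝ) ^ 2 * r ^ m := by ring
end

section
/- Let 𝓛 be an N×N doubly stochastic real matrix with all diagonal entries positive whose directed graph (an edge from j to i whenever 𝓛_{ij} > 0) is strongly connected. Let γ ∈ {0,1}. Then for all integers m ≥ d ≥ 1 and every index i: (1−γ)·N ≤ Σ_{j=1}^N ((N·[𝓛^m]_{ij})^2 − γ·N·[𝓛^m]_{ij}) ≤ Σ_{j=1}^N ((N·[𝓛^d]_{ij})^2 − γ·N·[𝓛^d]_{ij}). (Theorem 1, item 1 of the paper.) -/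
open Matrix

lemma ds_pow_nonneg {N : ℕ} (W : Matrix (Fin N) (Fin N) ℝ)
    (hnonneg : ∀ i j, 0 ≤ W i j) : ∀ m i j, 0 ≤ (W ^ m) i j := by
  intro m
  induction m with
  | zero => intro i j; rw [pow_zero]; by_cases h : i = j <;> simp [Matrix.one_apply, h]
  | succ m ih =>
    intro i j
    rw [pow_succ, Matrix.mul_apply]
    exact Finset.sum_nonneg fun k _ => mul_nonneg (ih i k) (hnonneg k j)

lemma ds_pow_row {N : ℕ} (W : Matrix (Fin N) (Fin N) ℝ)
    (hrow : ∀ i, ∑ j, W i j = 1) : ∀ m i, ∑ j, (W ^ m) i j = 1 := by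
  intro m
  induction m with
  | zero => intro i; simp [Matrix.one_apply]
  | succ m ih =>
    intro i
    simp only [pow_succ, Matrix.mul_apply]
    rw [Finset.sum_comm]
    simp_rw [← Finset.mul_sum, hrow, mul_one]
    exact ih i

lemma ds_pow_col {N : ℕ} (W : Matrix (Fin N) (Fin N) ℝ)
    (hcol : ∀ j, ∑ i, W i j = 1) : ∀ m j, ∑ i, (W ^ m) i j = 1 := by
  intro m
  induction m with
  | zero => intro j; simp [Matrix.one_apply]
  | succ m ih =>
    intro j
    simp only [pow_succ, Matrix.mul_apply]
    rw [Finset.sum_comm]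
    simp_rw [← Finset.sum_mul, ih, one_mul]
    exact hcol j

/-- Jensen step: applying a doubly stochastic matrix does not increase the ℓ² norm. -/
lemma ds_contract {N : ℕ} (D : Matrix (Fin N) (Fin N) ℝ)
    (h0 : ∀ i j, 0 ≤ D i j) (hr : ∀ i, ∑ j, D i j = 1) (hc : ∀ j, ∑ i, D i j = 1)
    (v : Fin N → ℝ) :
    ∑ i, (∑ j, D i j * v j) ^ 2 ≤ ∑ j, (v j) ^ 2 := by
  have step : ∀ i, (∑ j, D i j * v j) ^ 2 ≤ ∑ j, D i j * (v j) ^ 2 := by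
    intro i
    have cs := Finset.sum_mul_sq_le_sq_mul_sq Finset.univ
      (fun j => Real.sqrt (D i j)) (fun j => Real.sqrt (D i j) * v j)
    have h1 : ∀ j, Real.sqrt (D i j) * (Real.sqrt (D i j) * v j) = D i j * v j := by
      intro j; rw [← mul_assoc, Real.mul_self_sqrt (h0 i j)]
    have h2 : ∀ j, Real.sqrt (D i j) ^ 2 = D i j := fun j => Real.sq_sqrt (h0 i j)
    have h3 : ∀ j, (Real.sqrt (D i j) * v j) ^ 2 = D i j * (v j) ^ 2 := by
      intro j; rw [mul_pow, h2]
    simp_rw [h1, h2, h3, hr, one_mul] at cs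
    exact cs
  calc ∑ i, (∑ j, D i j * v j) ^ 2 ≤ ∑ i, ∑ j, D i j * (v j) ^ 2 :=
        Finset.sum_le_sum fun i _ => step i
    _ = ∑ j, (v j) ^ 2 := by
        rw [Finset.sum_comm]; simp_rw [← Finset.sum_mul, hc, one_mul]

/-- Theorem 1, item 1 of the paper: for a doubly stochastic matrix `𝓛` with positive
diagonal entries and strongly connected directed graph, and `γ ∈ {0,1}`, for all
`m ≥ d ≥ 1` and every row `i`,
`(1−γ) N ≤ ∑ⱼ ((N [𝓛^m]_{ij})² − γ N [𝓛^m]_{ij}) ≤ ∑ⱼ ((N [𝓛^d]_{ij})² − γ N [𝓛^d]_{ij})`. -/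
theorem stmt6 {N : ℕ} (hN : 1 ≤ N) (W : Matrix (Fin N) (Fin N) ℝ)
    (hnonneg : ∀ i j, 0 ≤ W i j)
    (hrow : ∀ i, ∑ j, W i j = 1)
    (hcol : ∀ j, ∑ i, W i j = 1)
    (hdiag : ∀ i, 0 < W i i)
    (hconn : ∀ i j, ∃ m : ℕ, 0 < (W ^ m) i j)
    (γ : ℝ) (hγ : γ = 0 ∨ γ = 1) :
    ∀ d m : ℕ, 1 ≤ d → d ≤ m → ∀ i,
      (1 - γ) * (N : ℝ) ≤
        ∑ j, (((N : ℝ) * (W ^ m) i j) ^ 2 - γ * ((N : ℝ) * (W ^ m) i j)) ∧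
      ∑ j, (((N : ℝ) * (W ^ m) i j) ^ 2 - γ * ((N : ℝ) * (W ^ m) i j)) ≤
        ∑ j, (((N : ℝ) * (W ^ d) i j) ^ 2 - γ * ((N : ℝ) * (W ^ d) i j)) := by
  intro d m hd hdm i
  have hNpos : (0 : ℝ) < N := by exact_mod_cast Nat.lt_of_lt_of_le Nat.zero_lt_one hN
  -- rewrite the sums
  have key : ∀ n : ℕ,
      ∑ j, (((N : ℝ) * (W ^ n) i j) ^ 2 - γ * ((N : ℝ) * (W ^ n) i j))
        = (N : ℝ) ^ 2 * (∑ j, ((W ^ n) i j) ^ 2) - γ * N := by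
    intro n
    rw [Finset.sum_sub_distrib]
    congr 1
    · rw [Finset.mul_sum]; exact Finset.sum_congr rfl fun j _ => by ring
    · simp_rw [← mul_assoc]
      rw [← Finset.mul_sum, ds_pow_row W hrow n i, mul_one]
  -- lower bound on sum of squares
  have lb : ∀ n : ℕ, (1 : ℝ) / N ≤ ∑ j, ((W ^ n) i j) ^ 2 := by
    intro n
    have cs := Finset.sum_mul_sq_le_sq_mul_sq Finset.univ
      (fun _ : Fin N => (1 : ℝ)) (fun j => (W ^ n) i j)
    simp only [one_mul, one_pow, Finset.sum_const, Finset.card_univ, Fintype.card_fin,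
      nsmul_eq_mul, mul_one, ds_pow_row W hrow n i, one_pow] at cs
    rw [div_le_iff₀ hNpos, mul_comm]
    exact cs
  -- monotonicity of sum of squares
  have mono : ∑ j, ((W ^ m) i j) ^ 2 ≤ ∑ j, ((W ^ d) i j) ^ 2 := by
    obtain ⟨k, rfl⟩ := Nat.exists_eq_add_of_le hdm
    have hq : ∀ j, (W ^ (d + k)) i j = ∑ l, (W ^ k)ᵀ j l * (W ^ d) i l := by
      intro j
      rw [pow_add, Matrix.mul_apply]
      exact Finset.sum_congr rfl fun l _ => by rw [Matrix.transpose_apply]; ring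
    simp_rw [hq]
    exact ds_contract ((W ^ k)ᵀ)
      (fun a b => ds_pow_nonneg W hnonneg k b a)
      (fun a => ds_pow_col W hcol k a)
      (fun b => ds_pow_row W hrow k b)
      (fun l => (W ^ d) i l)
  constructor
  · rw [key m]
    have : (N : ℝ) ≤ (N : ℝ) ^ 2 * ∑ j, ((W ^ m) i j) ^ 2 := by
      calc (N : ℝ) = (N : ℝ) ^ 2 * (1 / N) := by field_simp
        _ ≤ (N : ℝ) ^ 2 * ∑ j, ((W ^ m) i j) ^ 2 :=
            mul_le_mul_of_nonneg_left (lb m) (sq_nonneg _)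
    linarith
  · rw [key m, key d]
    have := mul_le_mul_of_nonneg_left mono (sq_nonneg (N : ℝ))
    linarith
end

section
/- Under the sensor setup, posterior definitions, and network setup: (1) for any fixed nonnegative weights a_1,…,a_N, if Φ^{ts} ⪰ 0 then Σ^t ⪰ Σ; (2) there exists a sequence (ε^{(L)})_{L≥1} of nonpositive real numbers with ε^{(L)} → 0 as L → ∞ such that Σ^{t(L)} − Σ^{(L)} ⪰ ε^{(L)}·I for every L ≥ 1, where the superscript (L) indicates the quantity computed with the fusion weights a_j^{(L)} = N·[𝓛^L]_{ij}. (Theorem 2 of the paper.) -/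
/-!
The fused estimate `Σᶠ((Pᶠ)⁻¹ x̂ + Σⱼ aⱼ Hⱼᵀ (Rⱼᵘ)⁻¹ yⱼ)` is a linear estimate with gains
`K₀ = Σᶠ (Pᶠ)⁻¹`, `Kⱼ = Σᶠ Hⱼᵀ (Rⱼᵘ)⁻¹` obeying the unbiasedness constraint `K₀ + Σⱼ aⱼ Kⱼ Hⱼ = I`.
By the Gauss–Markov argument, its error covariance `K₀ P K₀ᵀ + Σⱼ aⱼ Kⱼ Rⱼ Kⱼᵀ`, computed as if
sensor `j` had noise covariance `Rⱼ / aⱼ`, exceeds the optimum `Σ = (P⁻¹ + Φ)⁻¹` by a positive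
semidefinite matrix. The true covariance `Σᵗ` weights the noise terms by `aⱼ²` instead of `aⱼ`,
which adds exactly `Σᶠ Φᵗˢ Σᶠ`; hence `Σᵗ - Σ ⪰ Σᶠ Φᵗˢ Σᶠ` for all nonnegative weights, which
gives (1).

For (2), positive diagonal and strong connectivity make some power of `𝓛` entrywise positive, so
the spread of every column of `𝓛ᴸ` contracts geometrically; as the columns sum to one,
`N [𝓛ᴸ]ᵢⱼ → 1`. At the all-ones weights `Φᵗˢ = 0`, so `Σᶠ Φᵗˢ Σᶠ → 0` along the consensus
weights, and a symmetric matrix `M` satisfies `M ⪰ -(Σₚ,q |Mₚq|) I`.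
-/

open Matrix Filter

lemma Matrix.PosDef.transpose_eq {o : Type*} [Fintype o] {A : Matrix o o ℝ} (hA : A.PosDef) :
    Aᵀ = A :=
  (isHermitian_iff_isSymm.1 hA.isHermitian).eq

section Estimation

variable {ι κ : Type*} [Fintype κ] {m : κ → Type*} [∀ j, Fintype (m j)]

section Gain

variable [Fintype ι]

noncomputable def gainCov (P : Matrix ι ι ℝ) (R : ∀ j, Matrix (m j) (m j) ℝ) (a : κ → ℝ)
    (K₀ : Matrix ι ι ℝ) (K : ∀ j, Matrix ι (m j) ℝ) : Matrix ι ι ℝ :=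
  K₀ * P * K₀ᵀ + ∑ j, a j • (K j * R j * (K j)ᵀ)

theorem posSemidef_gainCov {P : Matrix ι ι ℝ} {R : ∀ j, Matrix (m j) (m j) ℝ} {a : κ → ℝ}
    (hP : P.PosSemidef) (hR : ∀ j, (R j).PosSemidef) (ha : ∀ j, 0 ≤ a j)
    (K₀ : Matrix ι ι ℝ) (K : ∀ j, Matrix ι (m j) ℝ) : (gainCov P R a K₀ K).PosSemidef := by
  simp only [gainCov, ← conjTranspose_eq_transpose_of_trivial]
  exact (hP.mul_mul_conjTranspose_same K₀).add <| posSemidef_sum _ fun j _ =>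
    ((hR j).mul_mul_conjTranspose_same (K j)).smul (ha j)

end Gain

variable [∀ j, DecidableEq (m j)]

noncomputable def weightedInfo (H : ∀ j, Matrix (m j) ι ℝ) (R : ∀ j, Matrix (m j) (m j) ℝ)
    (a : κ → ℝ) : Matrix ι ι ℝ :=
  ∑ j, a j • ((H j)ᵀ * (R j)⁻¹ * H j)

noncomputable def noiseInfo (H : ∀ j, Matrix (m j) ι ℝ) (R Ru : ∀ j, Matrix (m j) (m j) ℝ)
    (b : κ → ℝ) : Matrix ι ι ℝ :=
  ∑ j, b j • ((H j)ᵀ * (Ru j)⁻¹ * R j * (Ru j)⁻¹ * H j)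

theorem isSymm_noiseInfo {H : ∀ j, Matrix (m j) ι ℝ} {R Ru : ∀ j, Matrix (m j) (m j) ℝ}
    (hR : ∀ j, (R j).IsSymm) (hRu : ∀ j, (Ru j).IsSymm) (b : κ → ℝ) :
    (noiseInfo H R Ru b).IsSymm := by
  simp only [IsSymm, noiseInfo, transpose_sum, transpose_smul, transpose_mul, transpose_nonsing_inv,
    transpose_transpose, fun j => (hR j).eq, fun j => (hRu j).eq, Matrix.mul_assoc]

variable [Fintype ι]

theorem posSemidef_weightedInfo {H : ∀ j, Matrix (m j) ι ℝ} {R : ∀ j, Matrix (m j) (m j) ℝ}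
    {a : κ → ℝ} (hR : ∀ j, (R j).PosDef) (ha : ∀ j, 0 ≤ a j) :
    (weightedInfo H R a).PosSemidef := by
  simpa only [weightedInfo, conjTranspose_eq_transpose_of_trivial] using
    posSemidef_sum Finset.univ fun j _ =>
      ((hR j).inv.posSemidef.conjTranspose_mul_mul_same (H j)).smul (ha j)

variable [DecidableEq ι]

noncomputable def posteriorCov (P : Matrix ι ι ℝ) (H : ∀ j, Matrix (m j) ι ℝ)
    (R : ∀ j, Matrix (m j) (m j) ℝ) (a : κ → ℝ) : Matrix ι ι ℝ :=
  (P⁻¹ + weightedInfo H R a)⁻¹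

theorem posDef_posteriorCov {P : Matrix ι ι ℝ} {H : ∀ j, Matrix (m j) ι ℝ}
    {R : ∀ j, Matrix (m j) (m j) ℝ} {a : κ → ℝ} (hP : P.PosDef) (hR : ∀ j, (R j).PosDef)
    (ha : ∀ j, 0 ≤ a j) : (posteriorCov P H R a).PosDef :=
  (hP.inv.add_posSemidef (posSemidef_weightedInfo hR ha)).inv

theorem posteriorCov_mul_eq_one {P : Matrix ι ι ℝ} {H : ∀ j, Matrix (m j) ι ℝ}
    {R : ∀ j, Matrix (m j) (m j) ℝ} {a : κ → ℝ} (hP : P.PosDef) (hR : ∀ j, (R j).PosDef)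
    (ha : ∀ j, 0 ≤ a j) : posteriorCov P H R a * (P⁻¹ + weightedInfo H R a) = 1 :=
  nonsing_inv_mul _ <| (isUnit_iff_isUnit_det _).1
    (hP.inv.add_posSemidef (posSemidef_weightedInfo hR ha)).isUnit

theorem gainCov_sub_eq {P T : Matrix ι ι ℝ} {H : ∀ j, Matrix (m j) ι ℝ}
    {R : ∀ j, Matrix (m j) (m j) ℝ} {a : κ → ℝ}
    (hP : IsUnit P.det) (hPs : Pᵀ = P) (hR : ∀ j, IsUnit (R j).det) (hRs : ∀ j, (R j)ᵀ = R j)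
    (hT : T * (P⁻¹ + weightedInfo H R a) = 1) (hTs : Tᵀ = T)
    {K₀ : Matrix ι ι ℝ} {K : ∀ j, Matrix ι (m j) ℝ} (hK : K₀ + ∑ j, a j • (K j * H j) = 1) :
    gainCov P R a K₀ K - T =
      gainCov P R a (K₀ - T * P⁻¹) (fun j => K j - T * (H j)ᵀ * (R j)⁻¹) := by
  have h₀ : (K₀ - T * P⁻¹) * P * (K₀ - T * P⁻¹)ᵀ =
      K₀ * P * K₀ᵀ - K₀ * T - T * K₀ᵀ + T * P⁻¹ * T := by
    simp only [transpose_sub, transpose_mul, transpose_nonsing_inv, hPs, hTs, Matrix.sub_mul,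
      Matrix.mul_sub, Matrix.mul_assoc, mul_nonsing_inv_cancel_left _ _ hP,
      nonsing_inv_mul_cancel_left _ _ hP]
    abel
  have hj : ∀ j, (K j - T * (H j)ᵀ * (R j)⁻¹) * R j * (K j - T * (H j)ᵀ * (R j)⁻¹)ᵀ =
      K j * R j * (K j)ᵀ - K j * H j * T - T * (H j)ᵀ * (K j)ᵀ +
        T * ((H j)ᵀ * (R j)⁻¹ * H j) * T := by
    intro j
    simp only [transpose_sub, transpose_mul, transpose_nonsing_inv, transpose_transpose, hRs, hTs,
      Matrix.sub_mul, Matrix.mul_sub, Matrix.mul_assoc, mul_nonsing_inv_cancel_left _ _ (hR j),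
      nonsing_inv_mul_cancel_left _ _ (hR j)]
    abel
  have hKT : K₀ᵀ + ∑ j, a j • ((H j)ᵀ * (K j)ᵀ) = 1 := by
    simpa [transpose_sum] using congrArg transpose hK
  -- The cross terms with the optimal gains `(T P⁻¹, T Hⱼᵀ Rⱼ⁻¹)` collapse by unbiasedness.
  have expand : gainCov P R a (K₀ - T * P⁻¹) (fun j => K j - T * (H j)ᵀ * (R j)⁻¹) =
      gainCov P R a K₀ K - (K₀ + ∑ j, a j • (K j * H j)) * T
        - T * (K₀ᵀ + ∑ j, a j • ((H j)ᵀ * (K j)ᵀ)) + T * (P⁻¹ + weightedInfo H R a) * T := by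
    simp only [gainCov, h₀, hj]
    simp only [weightedInfo, smul_add, smul_sub, Finset.sum_add_distrib,
      Finset.sum_sub_distrib, Matrix.add_mul, Matrix.mul_add, Finset.sum_mul, Finset.mul_sum,
      Matrix.smul_mul, Matrix.mul_smul, Matrix.mul_assoc]
    abel
  rw [expand, hK, hKT, hT]
  simp

theorem posSemidef_gainCov_sub_posteriorCov {P : Matrix ι ι ℝ} {H : ∀ j, Matrix (m j) ι ℝ}
    {R : ∀ j, Matrix (m j) (m j) ℝ} {a : κ → ℝ} (hP : P.PosDef) (hR : ∀ j, (R j).PosDef)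
    (ha : ∀ j, 0 ≤ a j) {K₀ : Matrix ι ι ℝ} {K : ∀ j, Matrix ι (m j) ℝ}
    (hK : K₀ + ∑ j, a j • (K j * H j) = 1) :
    (gainCov P R a K₀ K - posteriorCov P H R a).PosSemidef := by
  rw [gainCov_sub_eq ((isUnit_iff_isUnit_det _).1 hP.isUnit) hP.transpose_eq
    (fun j => (isUnit_iff_isUnit_det _).1 (hR j).isUnit)
    (fun j => (hR j).transpose_eq) (posteriorCov_mul_eq_one hP hR ha)
    ((posDef_posteriorCov hP hR ha).transpose_eq) hK]
  exact posSemidef_gainCov hP.posSemidef (fun j => (hR j).posSemidef) ha _ _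

theorem continuousAt_posteriorCov {P : Matrix ι ι ℝ} {H : ∀ j, Matrix (m j) ι ℝ}
    {R : ∀ j, Matrix (m j) (m j) ℝ} {a : κ → ℝ} (hP : P.PosDef) (hR : ∀ j, (R j).PosDef)
    (ha : ∀ j, 0 ≤ a j) : ContinuousAt (posteriorCov P H R) a := by
  have hdet := (isUnit_iff_isUnit_det _).1
    (hP.inv.add_posSemidef (posSemidef_weightedInfo (H := H) hR ha)).isUnit
  have hinfo : Continuous fun a => P⁻¹ + weightedInfo H R a := by
    unfold weightedInfo
    fun_prop
  exact ContinuousAt.comp (g := Inv.inv)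
    (continuousAt_matrix_inv _ (NormedRing.inverse_continuousAt hdet.unit)) hinfo.continuousAt

noncomputable def actualCov (P Pf : Matrix ι ι ℝ) (H : ∀ j, Matrix (m j) ι ℝ)
    (R Ru : ∀ j, Matrix (m j) (m j) ℝ) (a : κ → ℝ) : Matrix ι ι ℝ :=
  posteriorCov Pf H Ru a * Pf⁻¹ * P * Pf⁻¹ * posteriorCov Pf H Ru a +
    posteriorCov Pf H Ru a * noiseInfo H R Ru (fun j => a j ^ 2) * posteriorCov Pf H Ru a

theorem posSemidef_actualCov_sub_posteriorCov_sub {P Pf : Matrix ι ι ℝ}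
    {H : ∀ j, Matrix (m j) ι ℝ} {R Ru : ∀ j, Matrix (m j) (m j) ℝ} {a : κ → ℝ}
    (hP : P.PosDef) (hPf : Pf.PosDef) (hR : ∀ j, (R j).PosDef) (hRu : ∀ j, (Ru j).PosDef)
    (ha : ∀ j, 0 ≤ a j) :
    (actualCov P Pf H R Ru a - posteriorCov P H R a - posteriorCov Pf H Ru a *
      noiseInfo H R Ru (fun j => a j ^ 2 - a j) * posteriorCov Pf H Ru a).PosSemidef := by
  set S := posteriorCov Pf H Ru a
  have hS : Sᵀ = S := (posDef_posteriorCov hPf hRu ha).transpose_eq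
  have hK : S * Pf⁻¹ + ∑ j, a j • (S * (H j)ᵀ * (Ru j)⁻¹ * H j) = 1 := by
    rw [← posteriorCov_mul_eq_one (H := H) hPf hRu ha]
    simp only [weightedInfo, Matrix.mul_add, Finset.mul_sum, Matrix.mul_smul, Matrix.mul_assoc, S]
  have hcov : gainCov P R a (S * Pf⁻¹) (fun j => S * (H j)ᵀ * (Ru j)⁻¹) =
      actualCov P Pf H R Ru a - S * noiseInfo H R Ru (fun j => a j ^ 2 - a j) * S := by
    simp only [gainCov, actualCov, noiseInfo, transpose_mul, transpose_nonsing_inv,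
      transpose_transpose, hS, hPf.transpose_eq,
      fun j => (hRu j).transpose_eq, sub_smul, Finset.sum_sub_distrib,
      Matrix.mul_sub, Matrix.sub_mul, Finset.mul_sum, Finset.sum_mul, Matrix.mul_smul,
      Matrix.smul_mul, Matrix.mul_assoc, S]
    abel
  rw [sub_right_comm, ← hcov]
  exact posSemidef_gainCov_sub_posteriorCov hP hR ha hK

theorem posSemidef_actualCov_sub_posteriorCov {P Pf : Matrix ι ι ℝ}
    {H : ∀ j, Matrix (m j) ι ℝ} {R Ru : ∀ j, Matrix (m j) (m j) ℝ} {a : κ → ℝ}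
    (hP : P.PosDef) (hPf : Pf.PosDef) (hR : ∀ j, (R j).PosDef) (hRu : ∀ j, (Ru j).PosDef)
    (ha : ∀ j, 0 ≤ a j) (hts : (noiseInfo H R Ru fun j => a j ^ 2 - a j).PosSemidef) :
    (actualCov P Pf H R Ru a - posteriorCov P H R a).PosSemidef := by
  have hS := (posDef_posteriorCov (H := H) hPf hRu ha).isHermitian.eq
  have hconj := hts.mul_mul_conjTranspose_same (posteriorCov Pf H Ru a)
  rw [hS] at hconj
  simpa using (posSemidef_actualCov_sub_posteriorCov_sub (H := H) hP hPf hR hRu ha).add hconj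

theorem tendsto_posteriorCov_mul_noiseInfo_mul {Pf : Matrix ι ι ℝ}
    {H : ∀ j, Matrix (m j) ι ℝ} {R Ru : ∀ j, Matrix (m j) (m j) ℝ}
    (hPf : Pf.PosDef) (hRu : ∀ j, (Ru j).PosDef) :
    Tendsto (fun a => posteriorCov Pf H Ru a * noiseInfo H R Ru (fun j => a j ^ 2 - a j) *
      posteriorCov Pf H Ru a) (nhds 1) (nhds 0) := by
  have hS := continuousAt_posteriorCov (H := H) (a := 1) hPf hRu fun _ => zero_le_one
  have hΦ : ContinuousAt (fun a : κ → ℝ => noiseInfo H R Ru fun j => a j ^ 2 - a j) 1 := by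
    unfold noiseInfo
    fun_prop
  have h : Tendsto (fun a => posteriorCov Pf H Ru a * noiseInfo H R Ru (fun j => a j ^ 2 - a j) *
      posteriorCov Pf H Ru a) (nhds 1) (nhds (posteriorCov Pf H Ru 1 *
        noiseInfo H R Ru (fun j => (1 : κ → ℝ) j ^ 2 - (1 : κ → ℝ) j) * posteriorCov Pf H Ru 1)) :=
    (hS.mul hΦ).mul hS
  have h₀ : noiseInfo H R Ru (fun j => (1 : κ → ℝ) j ^ 2 - (1 : κ → ℝ) j) = 0 := by
    simp [noiseInfo]
  rwa [h₀, mul_zero, zero_mul] at h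

theorem isHermitian_posteriorCov_mul_noiseInfo_mul {Pf : Matrix ι ι ℝ}
    {H : ∀ j, Matrix (m j) ι ℝ} {R Ru : ∀ j, Matrix (m j) (m j) ℝ} {a : κ → ℝ}
    (hPf : Pf.PosDef) (hR : ∀ j, (R j).PosDef) (hRu : ∀ j, (Ru j).PosDef) (ha : ∀ j, 0 ≤ a j)
    (b : κ → ℝ) :
    (posteriorCov Pf H Ru a * noiseInfo H R Ru b * posteriorCov Pf H Ru a).IsHermitian := by
  have := isHermitian_mul_mul_conjTranspose (posteriorCov Pf H Ru a) <|
    isHermitian_iff_isSymm.2 <| isSymm_noiseInfo (H := H)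
      (fun j => isHermitian_iff_isSymm.1 (hR j).isHermitian)
      (fun j => isHermitian_iff_isSymm.1 (hRu j).isHermitian) b
  rwa [(posDef_posteriorCov hPf hRu ha).isHermitian.eq] at this

end Estimation

section Perturbation

variable {ι : Type*} [Fintype ι] [DecidableEq ι]

theorem posSemidef_add_sum_abs_smul_one {M : Matrix ι ι ℝ} (hM : M.IsHermitian) :
    (M + (∑ p, ∑ q, |M p q|) • (1 : Matrix ι ι ℝ)).PosSemidef := by
  refine .of_dotProduct_mulVec_nonneg (hM.add (isHermitian_one.smul (.all _))) fun x => ?_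
  have hxx : ∀ p q, |x p * x q| ≤ x ⬝ᵥ x := fun p q => by
    have hsq : ∀ r, x r * x r ≤ x ⬝ᵥ x := fun r =>
      Finset.single_le_sum (f := fun r => x r * x r) (fun r _ => mul_self_nonneg _)
        (Finset.mem_univ r)
    rw [abs_mul]
    nlinarith [hsq p, hsq q, sq_nonneg (|x p| - |x q|), abs_mul_abs_self (x p),
      abs_mul_abs_self (x q)]
  have hquad : ∑ p, ∑ q, -(|M p q| * (x ⬝ᵥ x)) ≤ x ⬝ᵥ M *ᵥ x := by
    have hexp : x ⬝ᵥ M *ᵥ x = ∑ p, ∑ q, M p q * (x p * x q) := by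
      simp only [dotProduct, mulVec, Finset.mul_sum]
      exact Finset.sum_congr rfl fun p _ => Finset.sum_congr rfl fun q _ => by ring
    rw [hexp]
    refine Finset.sum_le_sum fun p _ => Finset.sum_le_sum fun q _ => ?_
    have := mul_le_mul_of_nonneg_left (hxx p q) (abs_nonneg (M p q))
    rw [← abs_mul] at this
    linarith [neg_abs_le (M p q * (x p * x q))]
  simp only [Finset.sum_neg_distrib, ← Finset.sum_mul] at hquad
  simp only [star_trivial, add_mulVec, smul_mulVec, one_mulVec, dotProduct_add, dotProduct_smul,
    smul_eq_mul]
  linarith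

theorem exists_tendsto_zero_posSemidef_sub_smul_one {M : ℕ → Matrix ι ι ℝ}
    (hM : ∀ L, (M L).IsHermitian) (hlim : Tendsto M atTop (nhds 0)) :
    ∃ ε : ℕ → ℝ, (∀ L, ε L ≤ 0) ∧ Tendsto ε atTop (nhds 0) ∧
      ∀ L, (M L - ε L • (1 : Matrix ι ι ℝ)).PosSemidef := by
  refine ⟨fun L => -∑ p, ∑ q, |M L p q|, fun L => ?_, ?_, fun L => ?_⟩
  · exact neg_nonpos.2 (by positivity)
  · have hcont : Continuous fun A : Matrix ι ι ℝ => -∑ p, ∑ q, |A p q| := by fun_prop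
    simpa [Function.comp_def] using (hcont.tendsto 0).comp hlim
  · simpa only [neg_smul, sub_neg_eq_add] using posSemidef_add_sum_abs_smul_one (hM L)

end Perturbation

section Consensus

variable {ι : Type*} [Fintype ι]

noncomputable def spread (v : ι → ℝ) : ℝ := (⨆ p, v p) - ⨅ p, v p

lemma spread_nonneg [Nonempty ι] (v : ι → ℝ) : 0 ≤ spread v := by
  obtain ⟨p⟩ := ‹Nonempty ι›
  exact sub_nonneg.2 ((ciInf_le (Finite.bddBelow_range v) p).trans
    (le_ciSup (Finite.bddAbove_range v) p))

theorem spread_mulVec_le [Nonempty ι] {A : Matrix ι ι ℝ} {δ : ℝ} (hA : ∀ p q, δ ≤ A p q)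
    (hrow : ∀ p, ∑ q, A p q = 1) (v : ι → ℝ) :
    spread (A *ᵥ v) ≤ (1 - Fintype.card ι * δ) * spread v := by
  have hsplit : ∀ p, (A *ᵥ v) p = ∑ r, (A p r - δ) * v r + δ * ∑ r, v r := fun p => by
    simp only [mulVec, dotProduct, sub_mul, Finset.sum_sub_distrib, Finset.mul_sum]
    ring
  have hmass : ∀ p, ∑ r, (A p r - δ) = 1 - Fintype.card ι * δ := fun p => by
    simp [Finset.sum_sub_distrib, hrow p]
  have hupper : ∀ p, (A *ᵥ v) p ≤ (1 - Fintype.card ι * δ) * (⨆ r, v r) + δ * ∑ r, v r :=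
    fun p => by
      rw [hsplit, ← hmass p, Finset.sum_mul]
      gcongr with r
      · exact sub_nonneg.2 (hA p r)
      · exact le_ciSup (Finite.bddAbove_range v) r
  have hlower : ∀ p, (1 - Fintype.card ι * δ) * (⨅ r, v r) + δ * ∑ r, v r ≤ (A *ᵥ v) p :=
    fun p => by
      rw [hsplit, ← hmass p, Finset.sum_mul]
      gcongr with r
      · exact sub_nonneg.2 (hA p r)
      · exact ciInf_le (Finite.bddBelow_range v) r
  have := ciSup_le hupper
  have := le_ciInf hlower
  unfold spread
  linarith

lemma abs_card_mul_sub_sum_le_spread [Nonempty ι] (v : ι → ℝ) (i : ι) :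
    |Fintype.card ι * v i - ∑ p, v p| ≤ Fintype.card ι * spread v := by
  have hsup : ∑ p, v p ≤ Fintype.card ι * ⨆ p, v p := by
    simpa using Finset.sum_le_sum fun p (_ : p ∈ Finset.univ) =>
      le_ciSup (Finite.bddAbove_range v) p
  have hinf : Fintype.card ι * (⨅ p, v p) ≤ ∑ p, v p := by
    simpa using Finset.sum_le_sum fun p (_ : p ∈ Finset.univ) =>
      ciInf_le (Finite.bddBelow_range v) p
  have hi₁ := le_ciSup (Finite.bddAbove_range v) i
  have hi₂ := ciInf_le (Finite.bddBelow_range v) i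
  have hcard : (0 : ℝ) ≤ Fintype.card ι := Nat.cast_nonneg _
  rw [abs_sub_le_iff, spread]
  constructor <;> nlinarith

variable [DecidableEq ι]

lemma pow_apply_pos_of_le {W : Matrix ι ι ℝ} (hW : ∀ p q, 0 ≤ W p q) (hdiag : ∀ p, 0 < W p p)
    {p q : ι} {k l : ℕ} (hkl : k ≤ l) (hk : 0 < (W ^ k) p q) : 0 < (W ^ l) p q := by
  induction l, hkl using Nat.le_induction with
  | base => exact hk
  | succ l _ ih =>
    rw [pow_succ, mul_apply]
    exact (mul_pos ih (hdiag q)).trans_le <| Finset.single_le_sum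
      (fun r _ => mul_nonneg (pow_apply_nonneg hW l p r) (hW r q)) (Finset.mem_univ q)

theorem exists_pow_apply_pos {W : Matrix ι ι ℝ} (hW : ∀ p q, 0 ≤ W p q)
    (hdiag : ∀ p, 0 < W p p) (hconn : ∀ p q, ∃ k : ℕ, 0 < (W ^ k) p q) :
    ∃ m, 0 < m ∧ ∀ p q, 0 < (W ^ m) p q := by
  choose k hk using hconn
  refine ⟨Finset.univ.sup (fun pq : ι × ι => k pq.1 pq.2) + 1, Nat.succ_pos _, fun p q => ?_⟩
  refine pow_apply_pos_of_le hW hdiag ?_ (hk p q)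
  exact (Finset.le_sup (f := fun pq : ι × ι => k pq.1 pq.2) (Finset.mem_univ (p, q))).trans
    (Nat.le_succ _)

lemma antitone_spread_pow_mulVec [Nonempty ι] {A : Matrix ι ι ℝ} (hA : A ∈ rowStochastic ℝ ι)
    (v : ι → ℝ) : Antitone fun L => spread ((A ^ L) *ᵥ v) := by
  refine antitone_nat_of_succ_le fun L => ?_
  have := spread_mulVec_le (A := A) (δ := 0) (fun p q => nonneg_of_mem_rowStochastic hA)
    (sum_row_of_mem_rowStochastic hA) ((A ^ L) *ᵥ v)
  simpa [mulVec_mulVec, ← pow_succ'] using this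

theorem exists_spread_pow_mulVec_le [Nonempty ι] {A : Matrix ι ι ℝ} (hA : A ∈ rowStochastic ℝ ι)
    {m : ℕ} (hpos : ∀ p q, 0 < (A ^ m) p q) :
    ∃ c : ℝ, 0 ≤ c ∧ c < 1 ∧ ∀ v L, spread ((A ^ L) *ᵥ v) ≤ c ^ (L / m) * spread v := by
  obtain ⟨⟨p₀, q₀⟩, hmin⟩ := Finite.exists_min fun pq : ι × ι => (A ^ m) pq.1 pq.2
  have hAm := pow_mem hA m
  set c := 1 - Fintype.card ι * (A ^ m) p₀ q₀
  have hc₀ : 0 ≤ c := by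
    have := Finset.sum_le_sum fun q (_ : q ∈ Finset.univ) => hmin (p₀, q)
    simp only [Finset.sum_const, Finset.card_univ, nsmul_eq_mul,
      sum_row_of_mem_rowStochastic hAm] at this
    linarith
  have hc₁ : c < 1 := by
    have : (0 : ℝ) < Fintype.card ι * (A ^ m) p₀ q₀ :=
      mul_pos (by exact_mod_cast Fintype.card_pos) (hpos _ _)
    linarith
  have hgeom : ∀ v K, spread ((A ^ (m * K)) *ᵥ v) ≤ c ^ K * spread v := by
    intro v K
    induction K with
    | zero => simp
    | succ K ih =>
      calc spread ((A ^ (m * (K + 1))) *ᵥ v)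
          = spread ((A ^ m) *ᵥ ((A ^ (m * K)) *ᵥ v)) := by
            rw [mulVec_mulVec, ← pow_add, mul_add_one, add_comm]
        _ ≤ c * spread ((A ^ (m * K)) *ᵥ v) :=
            spread_mulVec_le (fun p q => hmin (p, q)) (sum_row_of_mem_rowStochastic hAm) _
        _ ≤ c * (c ^ K * spread v) := mul_le_mul_of_nonneg_left ih hc₀
        _ = c ^ (K + 1) * spread v := by ring
  exact ⟨c, hc₀, hc₁, fun v L =>
    (antitone_spread_pow_mulVec hA v (Nat.mul_div_le L m)).trans (hgeom v (L / m))⟩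

theorem tendsto_spread_pow_mulVec [Nonempty ι] {A : Matrix ι ι ℝ} (hA : A ∈ rowStochastic ℝ ι)
    {m : ℕ} (hm : 0 < m) (hpos : ∀ p q, 0 < (A ^ m) p q) (v : ι → ℝ) :
    Tendsto (fun L => spread ((A ^ L) *ᵥ v)) atTop (nhds 0) := by
  obtain ⟨c, hc₀, hc₁, hbound⟩ := exists_spread_pow_mulVec_le hA hpos
  have hdecay : Tendsto (fun L => c ^ (L / m) * spread v) atTop (nhds 0) := by
    simpa using ((tendsto_pow_atTop_nhds_zero_of_lt_one hc₀ hc₁).comp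
      (Nat.tendsto_div_const_atTop hm.ne')).mul_const (spread v)
  exact tendsto_of_tendsto_of_tendsto_of_le_of_le tendsto_const_nhds hdecay
    (fun L => spread_nonneg _) (hbound v)

theorem tendsto_card_mul_pow_apply {W : Matrix ι ι ℝ} (hW : W ∈ doublyStochastic ℝ ι) {m : ℕ}
    (hm : 0 < m) (hpos : ∀ p q, 0 < (W ^ m) p q) (i j : ι) :
    Tendsto (fun L => (Fintype.card ι : ℝ) * (W ^ L) i j) atTop (nhds 1) := by
  have : Nonempty ι := ⟨i⟩
  have hspread := tendsto_spread_pow_mulVec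
    (mem_doublyStochastic_iff_mem_rowStochastic_and_mem_colStochastic.1 hW).1 hm hpos
    (Pi.single j 1)
  simp only [mulVec_single_one] at hspread
  rw [tendsto_iff_norm_sub_tendsto_zero]
  refine squeeze_zero_norm (fun L => ?_) (by simpa using hspread.const_mul (Fintype.card ι : ℝ))
  simpa [sum_col_of_mem_doublyStochastic (pow_mem hW L)] using
    abs_card_mul_sub_sum_le_spread ((W ^ L).col j) i

end Consensus

theorem stmt10_general {n N : ℕ}
    (md : Fin N → ℕ)
    (H : ∀ j, Matrix (Fin (md j)) (Fin n) ℝ)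
    (R Ru : ∀ j, Matrix (Fin (md j)) (Fin (md j)) ℝ)
    (hR : ∀ j, (R j).PosDef) (hRu : ∀ j, (Ru j).PosDef)
    (P : Matrix (Fin n) (Fin n) ℝ) (hP : P.PosDef)
    (Pf : Matrix (Fin n) (Fin n) ℝ) (hPf : Pf.PosDef)
    (W : Matrix (Fin N) (Fin N) ℝ)
    (hnonneg : ∀ p q, 0 ≤ W p q)
    (hrow : ∀ p, ∑ q, W p q = 1)
    (hcol : ∀ q, ∑ p, W p q = 1)
    (hdiag : ∀ p, 0 < W p p)
    (hconn : ∀ p q, ∃ m : ℕ, 0 < (W ^ m) p q)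
    (i : Fin N)
    (Phits Phi Phif Phit Sig Sigf Sigt : (Fin N → ℝ) → Matrix (Fin n) (Fin n) ℝ)
    (hPhits : ∀ a, Phits a =
      ∑ j, ((a j) ^ 2 - a j) • ((H j)ᵀ * (Ru j)⁻¹ * R j * (Ru j)⁻¹ * H j))
    (hPhi : ∀ a, Phi a = ∑ j, a j • ((H j)ᵀ * (R j)⁻¹ * H j))
    (hPhif : ∀ a, Phif a = ∑ j, a j • ((H j)ᵀ * (Ru j)⁻¹ * H j))
    (hPhit : ∀ a, Phit a =
      ∑ j, (a j) ^ 2 • ((H j)ᵀ * (Ru j)⁻¹ * R j * (Ru j)⁻¹ * H j))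
    (hSig : ∀ a, Sig a = (P⁻¹ + Phi a)⁻¹)
    (hSigf : ∀ a, Sigf a = (Pf⁻¹ + Phif a)⁻¹)
    (hSigt : ∀ a, Sigt a =
      Sigf a * Pf⁻¹ * P * Pf⁻¹ * Sigf a + Sigf a * Phit a * Sigf a) :
    (∀ a : Fin N → ℝ, (∀ j, 0 ≤ a j) → (Phits a).PosSemidef →
        (Sigt a - Sig a).PosSemidef) ∧
    (∃ ε : ℕ → ℝ, (∀ L, ε L ≤ 0) ∧ Tendsto ε atTop (nhds 0) ∧
      ∀ L : ℕ, 1 ≤ L →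
        (Sigt (fun j => (N : ℝ) * (W ^ L) i j) - Sig (fun j => (N : ℝ) * (W ^ L) i j)
          - ε L • (1 : Matrix (Fin n) (Fin n) ℝ)).PosSemidef) := by
  obtain rfl : Phits = fun a => noiseInfo H R Ru fun j => a j ^ 2 - a j := funext hPhits
  obtain rfl : Sig = posteriorCov P H R := funext fun a => by rw [hSig, hPhi]; rfl
  obtain rfl : Sigf = posteriorCov Pf H Ru := funext fun a => by rw [hSigf, hPhif]; rfl
  obtain rfl : Sigt = actualCov P Pf H R Ru :=
    funext fun a => by rw [hSigt, hSigf, hPhit, hPhif]; rfl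
  refine ⟨fun a ha hts => posSemidef_actualCov_sub_posteriorCov hP hPf hR hRu ha hts, ?_⟩
  set a : ℕ → Fin N → ℝ := fun L j => N * (W ^ L) i j
  have ha : ∀ L j, 0 ≤ a L j := fun L j =>
    mul_nonneg (Nat.cast_nonneg _) (pow_apply_nonneg hnonneg L i j)
  obtain ⟨m, hm, hpos⟩ := exists_pow_apply_pos hnonneg hdiag hconn
  have hW : W ∈ doublyStochastic ℝ (Fin N) :=
    mem_doublyStochastic_iff_sum.2 ⟨hnonneg, hrow, hcol⟩
  have hcons : Tendsto a atTop (nhds 1) := tendsto_pi_nhds.2 fun j => by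
    simpa using tendsto_card_mul_pow_apply hW hm hpos i j
  obtain ⟨ε, hε₀, hε, hεM⟩ := exists_tendsto_zero_posSemidef_sub_smul_one
    (fun L => isHermitian_posteriorCov_mul_noiseInfo_mul hPf hR hRu (ha L) _)
    ((tendsto_posteriorCov_mul_noiseInfo_mul hPf hRu).comp hcons)
  refine ⟨ε, hε₀, hε, fun L _ => ?_⟩
  convert (posSemidef_actualCov_sub_posteriorCov_sub hP hPf hR hRu (ha L)).add (hεM L) using 1
  abel

/-- Theorem 2 of the paper: (1) for any nonnegative fusion weights, if `Φᵗˢ ⪰ 0`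
then `Σᵗ ⪰ Σ`; (2) there is a nonpositive sequence `ε^{(L)} → 0` with
`Σ^{t(L)} − Σ^{(L)} ⪰ ε^{(L)} I` for every `L ≥ 1`, where the superscript `(L)`
uses the consensus weights `a_j^{(L)} = N [𝓛^L]_{ij}`. -/
theorem stmt10 {n N : ℕ} (hn : 1 ≤ n) (hN : 1 ≤ N)
    (md : Fin N → ℕ) (hmd : ∀ j, 1 ≤ md j)
    (H : ∀ j, Matrix (Fin (md j)) (Fin n) ℝ)
    (R Ru : ∀ j, Matrix (Fin (md j)) (Fin (md j)) ℝ)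
    (hRsymm : ∀ j, (R j).IsSymm) (hRusymm : ∀ j, (Ru j).IsSymm)
    (hR : ∀ j, (R j).PosDef) (hRu : ∀ j, (Ru j).PosDef)
    (P dQ : Matrix (Fin n) (Fin n) ℝ) (hPsymm : P.IsSymm) (hP : P.PosDef)
    (hdQsymm : dQ.IsSymm)
    (Pf : Matrix (Fin n) (Fin n) ℝ) (hPfdef : Pf = P + dQ) (hPf : Pf.PosDef)
    (W : Matrix (Fin N) (Fin N) ℝ)
    (hnonneg : ∀ p q, 0 ≤ W p q)
    (hrow : ∀ p, ∑ q, W p q = 1)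
    (hcol : ∀ q, ∑ p, W p q = 1)
    (hdiag : ∀ p, 0 < W p p)
    (hconn : ∀ p q, ∃ m : ℕ, 0 < (W ^ m) p q)
    (i : Fin N)
    (Phits Phi Phif Phit Sig Sigf Sigt : (Fin N → ℝ) → Matrix (Fin n) (Fin n) ℝ)
    (hPhits : ∀ a, Phits a =
      ∑ j, ((a j) ^ 2 - a j) • ((H j)ᵀ * (Ru j)⁻¹ * R j * (Ru j)⁻¹ * H j))
    (hPhi : ∀ a, Phi a = ∑ j, a j • ((H j)ᵀ * (R j)⁻¹ * H j))
    (hPhif : ∀ a, Phif a = ∑ j, a j • ((H j)ᵀ * (Ru j)⁻¹ * H j))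
    (hPhit : ∀ a, Phit a =
      ∑ j, (a j) ^ 2 • ((H j)ᵀ * (Ru j)⁻¹ * R j * (Ru j)⁻¹ * H j))
    (hSig : ∀ a, Sig a = (P⁻¹ + Phi a)⁻¹)
    (hSigf : ∀ a, Sigf a = (Pf⁻¹ + Phif a)⁻¹)
    (hSigt : ∀ a, Sigt a =
      Sigf a * Pf⁻¹ * P * Pf⁻¹ * Sigf a + Sigf a * Phit a * Sigf a) :
    (∀ a : Fin N → ℝ, (∀ j, 0 ≤ a j) → (Phits a).PosSemidef →
        (Sigt a - Sig a).PosSemidef) ∧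
    (∃ ε : ℕ → ℝ, (∀ L, ε L ≤ 0) ∧ Tendsto ε atTop (nhds 0) ∧
      ∀ L : ℕ, 1 ≤ L →
        (Sigt (fun j => (N : ℝ) * (W ^ L) i j) - Sig (fun j => (N : ℝ) * (W ^ L) i j)
          - ε L • (1 : Matrix (Fin n) (Fin n) ℝ)).PosSemidef) :=
  stmt10_general md H R Ru hR hRu P hP Pf hPf W hnonneg hrow hcol hdiag hconn i Phits Phi Phif Phit
    Sig Sigf Sigt hPhits hPhi hPhif hPhit hSig hSigf hSigt
end

section
/- Under the sensor setup and posterior definitions, suppose ΔR_j = 0 for all j ∈ {1,…,N}. (1) If ΔQ ≻ 0, then Σ ≺ Σ^f for any nonnegative fusion weights; moreover, with the unit fusion weights a_j = 1 for all j (the L → ∞ limit of the consensus weights), Σ ⪯ Σ^t ≺ Σ^f. (2) If ΔQ ≺ 0, then Σ^f ≺ Σ for any nonnegative fusion weights; moreover, with the unit fusion weights, Σ^f ⪯ Σ ⪯ Σ^t. (Theorem 5 of the paper, with the asymptotic inequalities stated at the limiting unit weights.) -/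
/-!
When `Rᵤ = R` the nominal and actual information matrices coincide, so `Σ` and `Σᶠ` differ only
in the prior, and comparing them amounts to applying the antitonicity of the inverse on positive
definite matrices twice. At unit weights, `Σᵗ` is the Joseph-form covariance of the update whose
gain is built from `Σᶠ` instead of `Σ`; as a function of that matrix it is a quadratic minimized
at `Σ`, where it equals `Σ`, so `Σ ⪯ Σᵗ`. Finally `Σᶠ - Σᵗ = Σᶠ (Pᶠ)⁻¹ ΔQ (Pᶠ)⁻¹ Σᶠ`.
-/

open Matrix

namespace Matrix

section Identities

variable {n α : Type*} [Fintype n] [DecidableEq n] [CommRing α] {P Pf Q : Matrix n n α}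

/-- `Σᵗ` at unit weights: the actual covariance of the posterior computed with the nominal
prior `Pf`. -/
noncomputable def mismatchedPosteriorCov (P Pf Q : Matrix n n α) : Matrix n n α :=
  (Pf⁻¹ + Q)⁻¹ * Pf⁻¹ * P * Pf⁻¹ * (Pf⁻¹ + Q)⁻¹ + (Pf⁻¹ + Q)⁻¹ * Q * (Pf⁻¹ + Q)⁻¹

theorem inv_add_sub_mismatchedPosteriorCov (hPf : IsUnit Pf.det) (hS : IsUnit (Pf⁻¹ + Q).det) :
    (Pf⁻¹ + Q)⁻¹ - mismatchedPosteriorCov P Pf Q =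
      (Pf⁻¹ + Q)⁻¹ * Pf⁻¹ * (Pf - P) * Pf⁻¹ * (Pf⁻¹ + Q)⁻¹ := by
  set S := (Pf⁻¹ + Q)⁻¹
  have hSS : S = S * (Pf⁻¹ + Q) * S := by rw [nonsing_inv_mul _ hS, Matrix.one_mul]
  have hPf' : Pf⁻¹ = Pf⁻¹ * Pf * Pf⁻¹ := by rw [nonsing_inv_mul _ hPf, Matrix.one_mul]
  calc S - mismatchedPosteriorCov P Pf Q
      = S * (Pf⁻¹ + Q) * S - mismatchedPosteriorCov P Pf Q := by rw [← hSS]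
    _ = S * (Pf⁻¹ * Pf * Pf⁻¹) * S - S * Pf⁻¹ * P * Pf⁻¹ * S := by
      rw [← hPf', mismatchedPosteriorCov]; noncomm_ring
    _ = S * Pf⁻¹ * (Pf - P) * Pf⁻¹ * S := by noncomm_ring

variable [StarRing α]

/-- Completing the square in the Joseph form `(1 - K H) P (1 - K H)ᴴ + K R Kᴴ`, written in terms
of `M` with `K = M Hᴴ R⁻¹` and `Q = Hᴴ R⁻¹ H`. -/
theorem joseph_form_sub_inv_add (hP : P.IsHermitian) (hQ : Q.IsHermitian)
    (hPu : IsUnit P.det) (hJ : IsUnit (P⁻¹ + Q).det) (M : Matrix n n α) :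
    (1 - M * Q) * P * (1 - M * Q)ᴴ + M * Q * Mᴴ - (P⁻¹ + Q)⁻¹ =
      (M - (P⁻¹ + Q)⁻¹) * (Q * P * Q + Q) * (M - (P⁻¹ + Q)⁻¹)ᴴ := by
  set J := (P⁻¹ + Q)⁻¹
  have hJh : Jᴴ = J := (hP.inv.add hQ).inv.eq
  have hPQJ : P * Q * J = P - J := calc
    P * Q * J = P * (P⁻¹ + Q) * J - P * P⁻¹ * J := by noncomm_ring
    _ = P - J := by rw [mul_assoc P, mul_nonsing_inv _ hJ, mul_nonsing_inv _ hPu]; noncomm_ring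
  have hJQP : J * Q * P = P - J := by
    simpa only [conjTranspose_mul, conjTranspose_sub, hJh, hP.eq, hQ.eq, Matrix.mul_assoc] using
      congrArg conjTranspose hPQJ
  have hWJ : (Q * P * Q + Q) * J = Q * P := by
    rw [show (Q * P * Q + Q) * J = Q * (P * Q * J) + Q * J by noncomm_ring, hPQJ]; noncomm_ring
  have hJW : J * (Q * P * Q + Q) = P * Q := by
    rw [show J * (Q * P * Q + Q) = J * Q * P * Q + J * Q by noncomm_ring, hJQP]; noncomm_ring
  rw [conjTranspose_sub, conjTranspose_sub, conjTranspose_one, conjTranspose_mul, hQ.eq, hJh]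
  calc (1 - M * Q) * P * (1 - Q * Mᴴ) + M * Q * Mᴴ - J
      = P - M * Q * P - P * Q * Mᴴ + M * (Q * P * Q + Q) * Mᴴ - J := by noncomm_ring
    _ = M * (Q * P * Q + Q) * Mᴴ - M * ((Q * P * Q + Q) * J) - J * (Q * P * Q + Q) * Mᴴ
        + J * (Q * P * Q + Q) * J := by
      rw [hWJ, hJW, hPQJ]; noncomm_ring
    _ = (M - J) * (Q * P * Q + Q) * (Mᴴ - J) := by noncomm_ring

theorem mismatchedPosteriorCov_sub_inv_add (hP : P.IsHermitian) (hPf : Pf.IsHermitian)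
    (hQ : Q.IsHermitian) (hPu : IsUnit P.det) (hJ : IsUnit (P⁻¹ + Q).det)
    (hS : IsUnit (Pf⁻¹ + Q).det) :
    mismatchedPosteriorCov P Pf Q - (P⁻¹ + Q)⁻¹ =
      ((Pf⁻¹ + Q)⁻¹ - (P⁻¹ + Q)⁻¹) * (Q * P * Q + Q) * ((Pf⁻¹ + Q)⁻¹ - (P⁻¹ + Q)⁻¹)ᴴ := by
  set S := (Pf⁻¹ + Q)⁻¹
  have hSh : Sᴴ = S := (hPf.inv.add hQ).inv.eq
  have hgain : 1 - S * Q = S * Pf⁻¹ := by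
    rw [sub_eq_iff_eq_add, ← mul_add, nonsing_inv_mul _ hS]
  have key := joseph_form_sub_inv_add hP hQ hPu hJ S
  rw [hgain, hSh, conjTranspose_mul, hSh, hPf.inv.eq, ← Matrix.mul_assoc] at key
  exact key

end Identities

section Order

variable {n K : Type*} [Fintype n] [DecidableEq n] [Field K] [PartialOrder K] [StarRing K]
  [AddLeftMono K] {A B P Pf Q : Matrix n n K}

theorem PosDef.inv_sub_inv (hA : A.PosDef) (hB : B.PosDef) (hBA : (B - A).PosDef) :
    (A⁻¹ - B⁻¹).PosDef := by
  have hAB : IsUnit A ↔ IsUnit B := iff_of_true hA.isUnit hB.isUnit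
  have hright : A⁻¹ - B⁻¹ = A⁻¹ * (B - A) * B⁻¹ := Matrix.inv_sub_inv hAB
  have hleft : B⁻¹ * (B - A) * A⁻¹ = A⁻¹ - B⁻¹ := by
    rw [← neg_sub A B, Matrix.mul_neg, Matrix.neg_mul, ← Matrix.inv_sub_inv hAB.symm, neg_sub]
  have hsplit : A⁻¹ - B⁻¹ =
      star B⁻¹ * (B - A) * B⁻¹ + star ((B - A) * B⁻¹) * A⁻¹ * ((B - A) * B⁻¹) := by
    simp only [star_mul, star_eq_conjTranspose, hB.inv.isHermitian.eq, hBA.isHermitian.eq]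
    calc A⁻¹ - B⁻¹ = B⁻¹ * (B - A) * B⁻¹ + (A⁻¹ - B⁻¹) * (B - A) * B⁻¹ := by
          rw [← add_mul, ← add_mul, add_sub_cancel, hright]
      _ = _ := by rw [← hleft]; noncomm_ring
  rw [hsplit]
  exact ((IsUnit.posDef_star_left_conjugate_iff hB.inv.isUnit).mpr hBA).add_posSemidef
    (hA.inv.posSemidef.conjTranspose_mul_mul_same _)

theorem PosDef.inv_add_sub_inv_add (hA : A.PosDef) (hB : B.PosDef) (hBA : (B - A).PosDef)
    (hQ : Q.PosSemidef) : ((B⁻¹ + Q)⁻¹ - (A⁻¹ + Q)⁻¹).PosDef := by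
  refine (hB.inv.add_posSemidef hQ).inv_sub_inv (hA.inv.add_posSemidef hQ) ?_
  rw [add_sub_add_right_eq_sub]
  exact hA.inv_sub_inv hB hBA

theorem posSemidef_mismatchedPosteriorCov_sub (hP : P.PosDef) (hPf : Pf.PosDef)
    (hQ : Q.PosSemidef) : (mismatchedPosteriorCov P Pf Q - (P⁻¹ + Q)⁻¹).PosSemidef := by
  have hJ := (isUnit_iff_isUnit_det _).mp (hP.inv.add_posSemidef hQ).isUnit
  have hS := (isUnit_iff_isUnit_det _).mp (hPf.inv.add_posSemidef hQ).isUnit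
  rw [mismatchedPosteriorCov_sub_inv_add hP.isHermitian hPf.isHermitian hQ.isHermitian
    ((isUnit_iff_isUnit_det _).mp hP.isUnit) hJ hS]
  have hQPQ : (Q * P * Q).PosSemidef := by
    simpa only [hQ.isHermitian.eq] using hP.posSemidef.conjTranspose_mul_mul_same Q
  exact (hQPQ.add hQ).mul_mul_conjTranspose_same _

theorem posDef_inv_add_sub_mismatchedPosteriorCov (hPf : Pf.PosDef) (hQ : Q.PosSemidef)
    (hPfP : (Pf - P).PosDef) : ((Pf⁻¹ + Q)⁻¹ - mismatchedPosteriorCov P Pf Q).PosDef := by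
  have hS := (hPf.inv.add_posSemidef hQ).inv
  rw [inv_add_sub_mismatchedPosteriorCov ((isUnit_iff_isUnit_det _).mp hPf.isUnit)
    ((isUnit_iff_isUnit_det _).mp (hPf.inv.add_posSemidef hQ).isUnit)]
  have hconj := (IsUnit.posDef_star_left_conjugate_iff (hPf.inv.isUnit.mul hS.isUnit)).mpr hPfP
  rwa [star_mul, star_eq_conjTranspose, star_eq_conjTranspose, hS.isHermitian.eq,
    hPf.inv.isHermitian.eq, ← Matrix.mul_assoc] at hconj

end Order

end Matrix

theorem posSemidef_sum_smul_transpose_mul_inv_mul {ι n : Type*} [Fintype ι] [Fintype n]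
    {m : ι → Type*} [∀ i, Fintype (m i)] [∀ i, DecidableEq (m i)] {a : ι → ℝ}
    (ha : ∀ i, 0 ≤ a i) (H : ∀ i, Matrix (m i) n ℝ) {R : ∀ i, Matrix (m i) (m i) ℝ}
    (hR : ∀ i, (R i).PosDef) : (∑ i, a i • ((H i)ᵀ * (R i)⁻¹ * H i)).PosSemidef :=
  posSemidef_sum _ fun i _ => by
    simpa only [conjTranspose_eq_transpose_of_trivial] using
      ((hR i).inv.posSemidef.conjTranspose_mul_mul_same (H i)).smul (ha i)

theorem stmt15_general {n N : ℕ} (md : Fin N → ℕ)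
    (H : ∀ j, Matrix (Fin (md j)) (Fin n) ℝ)
    (R Ru : ∀ j, Matrix (Fin (md j)) (Fin (md j)) ℝ)
    (hR : ∀ j, (R j).PosDef) (hdR : ∀ j, Ru j - R j = 0)
    (P dQ : Matrix (Fin n) (Fin n) ℝ) (hP : P.PosDef)
    (Pf : Matrix (Fin n) (Fin n) ℝ) (hPfdef : Pf = P + dQ) (hPf : Pf.PosDef)
    (Phi Phif Phit Sig Sigf Sigt : (Fin N → ℝ) → Matrix (Fin n) (Fin n) ℝ)
    (hPhi : ∀ a, Phi a = ∑ j, a j • ((H j)ᵀ * (R j)⁻¹ * H j))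
    (hPhif : ∀ a, Phif a = ∑ j, a j • ((H j)ᵀ * (Ru j)⁻¹ * H j))
    (hPhit : ∀ a, Phit a =
      ∑ j, (a j) ^ 2 • ((H j)ᵀ * (Ru j)⁻¹ * R j * (Ru j)⁻¹ * H j))
    (hSig : ∀ a, Sig a = (P⁻¹ + Phi a)⁻¹)
    (hSigf : ∀ a, Sigf a = (Pf⁻¹ + Phif a)⁻¹)
    (hSigt : ∀ a, Sigt a =
      Sigf a * Pf⁻¹ * P * Pf⁻¹ * Sigf a + Sigf a * Phit a * Sigf a) :
    (dQ.PosDef →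
      (∀ a : Fin N → ℝ, (∀ j, 0 ≤ a j) → (Sigf a - Sig a).PosDef) ∧
      (Sigt (fun _ => 1) - Sig (fun _ => 1)).PosSemidef ∧
      (Sigf (fun _ => 1) - Sigt (fun _ => 1)).PosDef) ∧
    ((-dQ).PosDef →
      (∀ a : Fin N → ℝ, (∀ j, 0 ≤ a j) → (Sig a - Sigf a).PosDef) ∧
      (Sig (fun _ => 1) - Sigf (fun _ => 1)).PosSemidef ∧
      (Sigt (fun _ => 1) - Sig (fun _ => 1)).PosSemidef) := by
  have hRuR : ∀ j, Ru j = R j := fun j => sub_eq_zero.mp (hdR j)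
  have hPhif' : ∀ a, Phif a = Phi a := fun a => by simp only [hPhif, hPhi, hRuR]
  have hPhit' : Phit (fun _ => 1) = Phi (fun _ => 1) := by
    simp only [hPhit, hPhi, hRuR, one_pow, one_smul,
      nonsing_inv_mul_cancel_right _ _ ((isUnit_iff_isUnit_det _).mp (hR _).isUnit)]
  have hPhiPSD : ∀ a, (∀ j, 0 ≤ a j) → (Phi a).PosSemidef := fun a ha =>
    hPhi a ▸ posSemidef_sum_smul_transpose_mul_inv_mul ha H hR
  have hSigf' : ∀ a, Sigf a = (Pf⁻¹ + Phi a)⁻¹ := fun a => by rw [hSigf, hPhif']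
  have hSigt' : Sigt (fun _ => 1) = mismatchedPosteriorCov P Pf (Phi fun _ => 1) := by
    rw [hSigt, hSigf', hPhit']; rfl
  have hPhi1 := hPhiPSD (fun _ => 1) fun _ => zero_le_one
  simp only [hSig, hSigf', hSigt']
  refine ⟨fun hdQ => ?_, fun hdQ => ?_⟩
  · rw [← add_sub_cancel_left P dQ, ← hPfdef] at hdQ
    exact ⟨fun a ha => hP.inv_add_sub_inv_add hPf hdQ (hPhiPSD a ha),
      posSemidef_mismatchedPosteriorCov_sub hP hPf hPhi1,
      posDef_inv_add_sub_mismatchedPosteriorCov hPf hPhi1 hdQ⟩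
  · rw [← sub_add_cancel_left P dQ, ← hPfdef] at hdQ
    exact ⟨fun a ha => hPf.inv_add_sub_inv_add hP hdQ (hPhiPSD a ha),
      (hPf.inv_add_sub_inv_add hP hdQ hPhi1).posSemidef,
      posSemidef_mismatchedPosteriorCov_sub hP hPf hPhi1⟩

/-- Theorem 5 of the paper (case `ΔRⱼ = 0` for all `j`, asymptotic inequalities
stated at the limiting unit weights `aⱼ = 1`):
(1) `ΔQ ≻ 0` implies `Σ ≺ Σᶠ` for any nonnegative weights, and at unit weights
`Σ ⪯ Σᵗ ≺ Σᶠ`; (2) `ΔQ ≺ 0` implies `Σᶠ ≺ Σ` for any nonnegative weights, and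
at unit weights `Σᶠ ⪯ Σ ⪯ Σᵗ`. -/
theorem stmt15 {n N : ℕ} (hn : 1 ≤ n) (hN : 1 ≤ N)
    (md : Fin N → ℕ) (hmd : ∀ j, 1 ≤ md j)
    (H : ∀ j, Matrix (Fin (md j)) (Fin n) ℝ)
    (R Ru : ∀ j, Matrix (Fin (md j)) (Fin (md j)) ℝ)
    (hRsymm : ∀ j, (R j).IsSymm) (hRusymm : ∀ j, (Ru j).IsSymm)
    (hR : ∀ j, (R j).PosDef) (hRu : ∀ j, (Ru j).PosDef)
    (hdR : ∀ j, Ru j - R j = 0)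
    (P dQ : Matrix (Fin n) (Fin n) ℝ) (hPsymm : P.IsSymm) (hP : P.PosDef)
    (hdQsymm : dQ.IsSymm)
    (Pf : Matrix (Fin n) (Fin n) ℝ) (hPfdef : Pf = P + dQ) (hPf : Pf.PosDef)
    (Phi Phif Phit Sig Sigf Sigt : (Fin N → ℝ) → Matrix (Fin n) (Fin n) ℝ)
    (hPhi : ∀ a, Phi a = ∑ j, a j • ((H j)ᵀ * (R j)⁻¹ * H j))
    (hPhif : ∀ a, Phif a = ∑ j, a j • ((H j)ᵀ * (Ru j)⁻¹ * H j))
    (hPhit : ∀ a, Phit a =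
      ∑ j, (a j) ^ 2 • ((H j)ᵀ * (Ru j)⁻¹ * R j * (Ru j)⁻¹ * H j))
    (hSig : ∀ a, Sig a = (P⁻¹ + Phi a)⁻¹)
    (hSigf : ∀ a, Sigf a = (Pf⁻¹ + Phif a)⁻¹)
    (hSigt : ∀ a, Sigt a =
      Sigf a * Pf⁻¹ * P * Pf⁻¹ * Sigf a + Sigf a * Phit a * Sigf a) :
    (dQ.PosDef →
      (∀ a : Fin N → ℝ, (∀ j, 0 ≤ a j) → (Sigf a - Sig a).PosDef) ∧
      (Sigt (fun _ => 1) - Sig (fun _ => 1)).PosSemidef ∧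
      (Sigf (fun _ => 1) - Sigt (fun _ => 1)).PosDef) ∧
    ((-dQ).PosDef →
      (∀ a : Fin N → ℝ, (∀ j, 0 ≤ a j) → (Sig a - Sigf a).PosDef) ∧
      (Sig (fun _ => 1) - Sigf (fun _ => 1)).PosSemidef ∧
      (Sigt (fun _ => 1) - Sig (fun _ => 1)).PosSemidef) :=
  stmt15_general md H R Ru hR hdR P dQ hP Pf hPfdef hPf Phi Phif Phit Sig Sigf Sigt hPhi hPhif hPhit
    hSig hSigf hSigt
end

section
/- Under the sensor setup and posterior definitions: (1) if Φ ⪯ Φ^f ⪯ Φ^t, Φ^{ts} ⪰ 0 and ΔQ ≺ 0, then Σ^f ⪯ Σ ⪯ Σ^t; (2) if Φ^t ⪯ Φ^f ⪯ Φ, Φ^{ts} ⪰ 0 and ΔQ ≻ 0, then Σ ⪯ Σ^t ⪯ Σ^f. (Theorem 6 of the paper.) -/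
/-!
Weighting the `j`-th sensor by `aⱼ` amounts to modelling its noise covariance as `Rⱼ / aⱼ`. In
that model `Σ = (P⁻¹ + Φ)⁻¹` is the covariance of the optimal (Gauss–Markov) linear estimator,
while `Σᵗ - Σᶠ Φᵗˢ Σᶠ` is the covariance of the estimator with the nominal gains `Σᶠ (Pᶠ)⁻¹` and
`aⱼ Σᶠ Hⱼᵀ (Rᵘⱼ)⁻¹`, which are unbiased because `Σᶠ ((Pᶠ)⁻¹ + Φᶠ) = 1`. Hence `Σ ⪯ Σᵗ` once
`Φᵗˢ ⪰ 0`. The other comparisons come from the antitonicity of inversion (`Σᶠ ⪯ Σ`) and from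
`Σᶠ - Σᵗ = Σᶠ ((Pᶠ)⁻¹ ΔQ (Pᶠ)⁻¹ + Φᶠ - Φᵗ) Σᶠ`.
-/

open Matrix
open scoped ComplexOrder

namespace Matrix

variable {𝕜 : Type*} [RCLike 𝕜] {n : Type*} [Fintype n] [DecidableEq n]

theorem PosDef.posSemidef_inv_sub_inv {A B : Matrix n n 𝕜} (hA : A.PosDef)
    (hAB : (B - A).PosSemidef) : (A⁻¹ - B⁻¹).PosSemidef := by
  have hB : B.PosDef := by simpa using hA.add_posSemidef hAB
  have hAu : IsUnit A.det := hA.isUnit.map detMonoidHom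
  have hBu : IsUnit B.det := hB.isUnit.map detMonoidHom
  have hdecomp : A⁻¹ - B⁻¹ = (A⁻¹ - B⁻¹) * A * (A⁻¹ - B⁻¹)ᴴ + B⁻¹ * (B - A) * B⁻¹ᴴ := by
    rw [conjTranspose_sub, hA.inv.isHermitian.eq, hB.inv.isHermitian.eq]
    simp only [sub_mul, mul_sub, mul_assoc, nonsing_inv_mul _ hAu, nonsing_inv_mul _ hBu,
      mul_nonsing_inv _ hAu, mul_one, one_mul]
    abel
  rw [hdecomp]
  exact (hA.posSemidef.mul_mul_conjTranspose_same _).add (hAB.mul_mul_conjTranspose_same _)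

theorem posSemidef_inv_add_sub_inv_add {P₁ P₂ Φ₁ Φ₂ : Matrix n n 𝕜} (hP₁ : P₁.PosDef)
    (hP₂ : P₂.PosDef) (hP : (P₁ - P₂).PosSemidef) (hΦ₁ : Φ₁.PosSemidef)
    (hΦ : (Φ₂ - Φ₁).PosSemidef) : ((P₁⁻¹ + Φ₁)⁻¹ - (P₂⁻¹ + Φ₂)⁻¹).PosSemidef := by
  refine (hP₁.inv.add_posSemidef hΦ₁).posSemidef_inv_sub_inv ?_
  rw [add_sub_add_comm]
  exact (hP₂.posSemidef_inv_sub_inv hP).add hΦ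

theorem posSemidef_sub_mul_mul_self {S A B : Matrix n n 𝕜} (hS : S.IsHermitian)
    (hSA : S * A = 1) (hAB : (A - B).PosSemidef) : (S - S * B * S).PosSemidef := by
  have h := hAB.mul_mul_conjTranspose_same S
  rwa [hS.eq, mul_sub, sub_mul, hSA, one_mul] at h

end Matrix

namespace SensorFusion

variable {𝕜 : Type*} [RCLike 𝕜] {n : Type*} [Fintype n]
  {ι : Type*} [Fintype ι] {m : ι → Type*} [∀ j, Fintype (m j)]

/-- The error covariance of the estimate `K x₀ + ∑ⱼ aⱼ Lⱼ yⱼ` of `x` when the prior `x₀` has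
error covariance `P` and the measurements `yⱼ = Hⱼ x + vⱼ` have independent noises `vⱼ` of
covariance `Rⱼ / aⱼ`. -/
def linearEstimatorCov (P : Matrix n n 𝕜) (a : ι → ℝ) (R : ∀ j, Matrix (m j) (m j) 𝕜)
    (K : Matrix n n 𝕜) (L : ∀ j, Matrix n (m j) 𝕜) : Matrix n n 𝕜 :=
  K * P * Kᴴ + ∑ j, a j • (L j * R j * (L j)ᴴ)

theorem posSemidef_linearEstimatorCov {P : Matrix n n 𝕜} (hP : P.PosSemidef) {a : ι → ℝ}
    (ha : ∀ j, 0 ≤ a j) {R : ∀ j, Matrix (m j) (m j) 𝕜} (hR : ∀ j, (R j).PosSemidef)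
    (K : Matrix n n 𝕜) (L : ∀ j, Matrix n (m j) 𝕜) : (linearEstimatorCov P a R K L).PosSemidef :=
  (hP.mul_mul_conjTranspose_same K).add <|
    posSemidef_sum _ fun j _ => ((hR j).mul_mul_conjTranspose_same (L j)).smul (ha j)

theorem sandwich_sub_mul_inv {k : Type*} [Fintype k] [DecidableEq k] {M : Matrix k k 𝕜}
    (hM : M.IsHermitian) (hMu : IsUnit M.det) {S : Matrix n n 𝕜} (hS : S.IsHermitian)
    (X : Matrix n k 𝕜) (B : Matrix k n 𝕜) :
    (X - S * Bᴴ * M⁻¹) * M * (X - S * Bᴴ * M⁻¹)ᴴ =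
      X * M * Xᴴ - X * B * S - S * (X * B)ᴴ + S * (Bᴴ * M⁻¹ * B) * S := by
  rw [conjTranspose_sub, conjTranspose_mul, conjTranspose_mul, conjTranspose_mul,
    hM.inv.eq, hS.eq, conjTranspose_conjTranspose]
  simp only [Matrix.sub_mul, Matrix.mul_sub, Matrix.mul_assoc,
    nonsing_inv_mul_cancel_left _ _ hMu, mul_nonsing_inv_cancel_left _ _ hMu]
  abel

variable [∀ j, DecidableEq (m j)]

noncomputable def weightedInformation (a : ι → ℝ) (H : ∀ j, Matrix (m j) n 𝕜)
    (R : ∀ j, Matrix (m j) (m j) 𝕜) : Matrix n n 𝕜 :=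
  ∑ j, a j • ((H j)ᴴ * (R j)⁻¹ * H j)

variable {a : ι → ℝ} {H : ∀ j, Matrix (m j) n 𝕜} {R : ∀ j, Matrix (m j) (m j) 𝕜}

theorem posSemidef_weightedInformation (ha : ∀ j, 0 ≤ a j) (hR : ∀ j, (R j).PosSemidef) :
    (weightedInformation a H R).PosSemidef :=
  posSemidef_sum _ fun j _ => ((hR j).inv.conjTranspose_mul_mul_same (H j)).smul (ha j)

variable [DecidableEq n] {P S : Matrix n n 𝕜}

theorem linearEstimatorCov_sub_gain (hP : P.IsHermitian) (hPu : IsUnit P.det)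
    (hR : ∀ j, (R j).IsHermitian) (hRu : ∀ j, IsUnit (R j).det) (hS : S.IsHermitian)
    (K : Matrix n n 𝕜) (L : ∀ j, Matrix n (m j) 𝕜) :
    linearEstimatorCov P a R (K - S * P⁻¹) (fun j => L j - S * (H j)ᴴ * (R j)⁻¹) =
      linearEstimatorCov P a R K L - (K + ∑ j, a j • (L j * H j)) * S
        - S * (K + ∑ j, a j • (L j * H j))ᴴ + S * (P⁻¹ + weightedInformation a H R) * S := by
  have hprior := sandwich_sub_mul_inv hP hPu hS K 1
  simp only [conjTranspose_one, mul_one, one_mul] at hprior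
  unfold linearEstimatorCov weightedInformation
  rw [hprior, Finset.sum_congr rfl fun j _ =>
    congrArg (a j • ·) (sandwich_sub_mul_inv (hR j) (hRu j) hS (L j) (H j))]
  simp only [smul_add, smul_sub, Finset.sum_add_distrib, Finset.sum_sub_distrib, Matrix.add_mul,
    Matrix.mul_add, Finset.sum_mul, Finset.mul_sum, conjTranspose_add, conjTranspose_sum,
    conjTranspose_smul, star_trivial, Matrix.smul_mul, Matrix.mul_smul, Matrix.mul_assoc]
  abel

/-- Gauss–Markov: for unbiased gains the cross terms of `linearEstimatorCov_sub_gain` collapse,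
so the excess over the optimal covariance is the covariance of the deviation from the optimal
gains `S P⁻¹`, `S Hⱼᴴ Rⱼ⁻¹`. -/
theorem posSemidef_linearEstimatorCov_sub_inv (hP : P.PosDef) (ha : ∀ j, 0 ≤ a j)
    (hR : ∀ j, (R j).PosDef) {K : Matrix n n 𝕜} {L : ∀ j, Matrix n (m j) 𝕜}
    (hKL : K + ∑ j, a j • (L j * H j) = 1) :
    (linearEstimatorCov P a R K L - (P⁻¹ + weightedInformation a H R)⁻¹).PosSemidef := by
  have hI : (P⁻¹ + weightedInformation a H R).PosDef :=
    hP.inv.add_posSemidef (posSemidef_weightedInformation ha fun j => (hR j).posSemidef)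
  have hdev := linearEstimatorCov_sub_gain (a := a) (H := H) hP.isHermitian
    (hP.isUnit.map detMonoidHom) (fun j => (hR j).isHermitian)
    (fun j => (hR j).isUnit.map detMonoidHom) hI.inv.isHermitian K L
  rw [hKL, one_mul, conjTranspose_one, mul_one,
    nonsing_inv_mul _ (hI.isUnit.map detMonoidHom), one_mul, sub_add_cancel] at hdev
  rw [← hdev]
  exact posSemidef_linearEstimatorCov hP.posSemidef ha (fun j => (hR j).posSemidef) _ _

theorem nominalGain_unbiased {Ru : ∀ j, Matrix (m j) (m j) 𝕜}
    (hS : S * (P⁻¹ + weightedInformation a H Ru) = 1) :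
    S * P⁻¹ + ∑ j, a j • (S * (H j)ᴴ * (Ru j)⁻¹ * H j) = 1 := by
  rw [← hS, Matrix.mul_add, weightedInformation, Finset.mul_sum]
  simp only [Matrix.mul_smul, Matrix.mul_assoc]

theorem linearEstimatorCov_nominalGain {Pf : Matrix n n 𝕜} {Ru : ∀ j, Matrix (m j) (m j) 𝕜}
    (hS : S.IsHermitian) (hPf : Pf.IsHermitian) (hRu : ∀ j, (Ru j).IsHermitian) :
    linearEstimatorCov P a R (S * Pf⁻¹) (fun j => S * (H j)ᴴ * (Ru j)⁻¹) =
      S * Pf⁻¹ * P * Pf⁻¹ * S +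
        S * (∑ j, a j • ((H j)ᴴ * (Ru j)⁻¹ * R j * (Ru j)⁻¹ * H j)) * S := by
  simp only [linearEstimatorCov, conjTranspose_mul, conjTranspose_conjTranspose, hS.eq,
    hPf.inv.eq, (hRu _).inv.eq, Finset.mul_sum, Finset.sum_mul, Matrix.mul_smul,
    Matrix.smul_mul, Matrix.mul_assoc]

theorem posSemidef_actualCov_sub_inv {Pf : Matrix n n 𝕜} {Ru : ∀ j, Matrix (m j) (m j) 𝕜}
    (hP : P.PosDef) (ha : ∀ j, 0 ≤ a j) (hR : ∀ j, (R j).PosDef) (hPf : Pf.IsHermitian)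
    (hRu : ∀ j, (Ru j).IsHermitian) (hS : S.IsHermitian)
    (hSI : S * (Pf⁻¹ + weightedInformation a H Ru) = 1)
    (hts : (∑ j, (a j ^ 2 - a j) • ((H j)ᴴ * (Ru j)⁻¹ * R j * (Ru j)⁻¹ * H j)).PosSemidef) :
    (S * Pf⁻¹ * P * Pf⁻¹ * S + S * (∑ j, a j ^ 2 • ((H j)ᴴ * (Ru j)⁻¹ * R j * (Ru j)⁻¹ * H j)) * S
      - (P⁻¹ + weightedInformation a H R)⁻¹).PosSemidef := by
  have hsplit : ∑ j, a j ^ 2 • ((H j)ᴴ * (Ru j)⁻¹ * R j * (Ru j)⁻¹ * H j) =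
      ∑ j, a j • ((H j)ᴴ * (Ru j)⁻¹ * R j * (Ru j)⁻¹ * H j) +
        ∑ j, (a j ^ 2 - a j) • ((H j)ᴴ * (Ru j)⁻¹ * R j * (Ru j)⁻¹ * H j) := by
    simp only [← Finset.sum_add_distrib, ← add_smul, add_sub_cancel]
  rw [hsplit, Matrix.mul_add, Matrix.add_mul, ← add_assoc,
    ← linearEstimatorCov_nominalGain hS hPf hRu, add_sub_right_comm]
  refine (posSemidef_linearEstimatorCov_sub_inv hP ha hR (nominalGain_unbiased hSI)).add ?_
  simpa only [hS.eq] using hts.mul_mul_conjTranspose_same S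

theorem posSemidef_sub_actualCov {Pf Φf Φt : Matrix n n 𝕜} (hPf : Pf.PosDef)
    (hS : S.IsHermitian) (hSI : S * (Pf⁻¹ + Φf) = 1) (hP : (Pf - P).PosSemidef)
    (hΦ : (Φf - Φt).PosSemidef) :
    (S - (S * Pf⁻¹ * P * Pf⁻¹ * S + S * Φt * S)).PosSemidef := by
  have hsandwich : S * Pf⁻¹ * P * Pf⁻¹ * S + S * Φt * S = S * (Pf⁻¹ * P * Pf⁻¹ + Φt) * S := by
    simp only [Matrix.mul_add, Matrix.add_mul, Matrix.mul_assoc]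
  have hprior : Pf⁻¹ - Pf⁻¹ * P * Pf⁻¹ = Pf⁻¹ * (Pf - P) * Pf⁻¹ := by
    rw [Matrix.mul_sub, Matrix.sub_mul, nonsing_inv_mul _ (hPf.isUnit.map detMonoidHom), one_mul]
  rw [hsandwich]
  refine posSemidef_sub_mul_mul_self hS hSI ?_
  rw [add_sub_add_comm, hprior]
  refine .add ?_ hΦ
  simpa only [hPf.inv.isHermitian.eq] using hP.mul_mul_conjTranspose_same Pf⁻¹

end SensorFusion

open SensorFusion

theorem stmt16_general {n N : ℕ}
    (md : Fin N → ℕ)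
    (H : ∀ j, Matrix (Fin (md j)) (Fin n) ℝ)
    (R Ru : ∀ j, Matrix (Fin (md j)) (Fin (md j)) ℝ)
    (hR : ∀ j, (R j).PosDef) (hRu : ∀ j, (Ru j).PosDef)
    (a : Fin N → ℝ) (ha : ∀ j, 0 ≤ a j)
    (P dQ : Matrix (Fin n) (Fin n) ℝ) (hP : P.PosDef)
    (Pf : Matrix (Fin n) (Fin n) ℝ) (hPfdef : Pf = P + dQ) (hPf : Pf.PosDef)
    (Phif Phi Phit Phits : Matrix (Fin n) (Fin n) ℝ)
    (hPhif : Phif = ∑ j, a j • ((H j)ᵀ * (Ru j)⁻¹ * H j))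
    (hPhi : Phi = ∑ j, a j • ((H j)ᵀ * (R j)⁻¹ * H j))
    (hPhit : Phit = ∑ j, (a j) ^ 2 • ((H j)ᵀ * (Ru j)⁻¹ * R j * (Ru j)⁻¹ * H j))
    (hPhits : Phits = ∑ j, ((a j) ^ 2 - a j) • ((H j)ᵀ * (Ru j)⁻¹ * R j * (Ru j)⁻¹ * H j))
    (Sig Sigf Sigt : Matrix (Fin n) (Fin n) ℝ)
    (hSig : Sig = (P⁻¹ + Phi)⁻¹)
    (hSigf : Sigf = (Pf⁻¹ + Phif)⁻¹)
    (hSigt : Sigt = Sigf * Pf⁻¹ * P * Pf⁻¹ * Sigf + Sigf * Phit * Sigf) :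
    ((Phif - Phi).PosSemidef → (Phit - Phif).PosSemidef → Phits.PosSemidef →
      (-dQ).PosDef →
      (Sig - Sigf).PosSemidef ∧ (Sigt - Sig).PosSemidef) ∧
    ((Phif - Phit).PosSemidef → (Phi - Phif).PosSemidef → Phits.PosSemidef →
      dQ.PosDef →
      (Sigt - Sig).PosSemidef ∧ (Sigf - Sigt).PosSemidef) := by
  simp only [← conjTranspose_eq_transpose_of_trivial] at hPhif hPhi hPhit hPhits
  change Phif = weightedInformation a H Ru at hPhif
  change Phi = weightedInformation a H R at hPhi
  have hIf : (Pf⁻¹ + Phif).PosDef :=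
    hPf.inv.add_posSemidef (hPhif ▸ posSemidef_weightedInformation ha (hRu · |>.posSemidef))
  have hSigfH : Sigf.IsHermitian := hSigf ▸ hIf.inv.isHermitian
  have hSigfI : Sigf * (Pf⁻¹ + Phif) = 1 := hSigf ▸ nonsing_inv_mul _ (hIf.isUnit.map detMonoidHom)
  have hopt (hts : Phits.PosSemidef) : (Sigt - Sig).PosSemidef := by
    rw [hSigt, hSig, hPhi, hPhit]
    exact posSemidef_actualCov_sub_inv hP ha hR hPf.isHermitian (hRu · |>.isHermitian) hSigfH
      (hPhif ▸ hSigfI) (hPhits ▸ hts)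
  refine ⟨fun hΦ _ hts hdQ => ⟨?_, hopt hts⟩, fun hΦ _ hts hdQ => ⟨hopt hts, ?_⟩⟩
  · rw [hSig, hSigf]
    refine posSemidef_inv_add_sub_inv_add hP hPf ?_
      (hPhi ▸ posSemidef_weightedInformation ha (hR · |>.posSemidef)) hΦ
    simpa only [hPfdef, sub_add_cancel_left] using hdQ.posSemidef
  · rw [hSigt]
    refine posSemidef_sub_actualCov hPf hSigfH hSigfI ?_ hΦ
    simpa only [hPfdef, add_sub_cancel_left] using hdQ.posSemidef

/-- Theorem 6 of the paper:
(1) `Φ ⪯ Φᶠ ⪯ Φᵗ`, `Φᵗˢ ⪰ 0` and `ΔQ ≺ 0` imply `Σᶠ ⪯ Σ ⪯ Σᵗ`;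
(2) `Φᵗ ⪯ Φᶠ ⪯ Φ`, `Φᵗˢ ⪰ 0` and `ΔQ ≻ 0` imply `Σ ⪯ Σᵗ ⪯ Σᶠ`. -/
theorem stmt16 {n N : ℕ} (hn : 1 ≤ n) (hN : 1 ≤ N)
    (md : Fin N → ℕ) (hmd : ∀ j, 1 ≤ md j)
    (H : ∀ j, Matrix (Fin (md j)) (Fin n) ℝ)
    (R Ru : ∀ j, Matrix (Fin (md j)) (Fin (md j)) ℝ)
    (hRsymm : ∀ j, (R j).IsSymm) (hRusymm : ∀ j, (Ru j).IsSymm)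
    (hR : ∀ j, (R j).PosDef) (hRu : ∀ j, (Ru j).PosDef)
    (a : Fin N → ℝ) (ha : ∀ j, 0 ≤ a j)
    (P dQ : Matrix (Fin n) (Fin n) ℝ) (hPsymm : P.IsSymm) (hP : P.PosDef)
    (hdQsymm : dQ.IsSymm)
    (Pf : Matrix (Fin n) (Fin n) ℝ) (hPfdef : Pf = P + dQ) (hPf : Pf.PosDef)
    (Phif Phi Phit Phits : Matrix (Fin n) (Fin n) ℝ)
    (hPhif : Phif = ∑ j, a j • ((H j)ᵀ * (Ru j)⁻¹ * H j))
    (hPhi : Phi = ∑ j, a j • ((H j)ᵀ * (R j)⁻¹ * H j))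
    (hPhit : Phit = ∑ j, (a j) ^ 2 • ((H j)ᵀ * (Ru j)⁻¹ * R j * (Ru j)⁻¹ * H j))
    (hPhits : Phits = ∑ j, ((a j) ^ 2 - a j) • ((H j)ᵀ * (Ru j)⁻¹ * R j * (Ru j)⁻¹ * H j))
    (Sig Sigf Sigt : Matrix (Fin n) (Fin n) ℝ)
    (hSig : Sig = (P⁻¹ + Phi)⁻¹)
    (hSigf : Sigf = (Pf⁻¹ + Phif)⁻¹)
    (hSigt : Sigt = Sigf * Pf⁻¹ * P * Pf⁻¹ * Sigf + Sigf * Phit * Sigf) :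
    ((Phif - Phi).PosSemidef → (Phit - Phif).PosSemidef → Phits.PosSemidef →
      (-dQ).PosDef →
      (Sig - Sigf).PosSemidef ∧ (Sigt - Sig).PosSemidef) ∧
    ((Phif - Phit).PosSemidef → (Phi - Phif).PosSemidef → Phits.PosSemidef →
      dQ.PosDef →
      (Sigt - Sig).PosSemidef ∧ (Sigf - Sigt).PosSemidef) :=
  stmt16_general md H R Ru hR hRu a ha P dQ hP Pf hPfdef hPf Phif Phi Phit Phits hPhif hPhi hPhit
    hPhits Sig Sigf Sigt hSig hSigf hSigt
end

section
/- Under the recursive setup: (1) if for every t ∈ {k,…,m} one has Φ_t ⪯ Φ^f_t ⪯ Φ^t_t, Φ^{ts}_t ⪰ 0 and ΔQ_{t−1} ≺ 0, then Σ^f_m ⪯ Σ_m ⪯ Σ^t_m; (2) if for every t ∈ {k,…,m} one has Φ^t_t ⪯ Φ^f_t ⪯ Φ_t, Φ^{ts}_t ⪰ 0 and ΔQ_{t−1} ≻ 0, then Σ_m ⪯ Σ^t_m ⪯ Σ^f_m. (Theorem 7 of the paper: recursive relations among the three performance evaluation indices.) -/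
/-!
The standard and nominal filters are information-form updates `(P⁻¹ + Φ)⁻¹`, which are monotone
in the prior `P` and antitone in the information `Φ`; with the priors `F Σ Fᵀ + Q` monotone in
`Σ` and `Q`, this orders `Σᶠ` and `Σ` inductively. The actual covariance `Σᵗ` is the Joseph-form
covariance of the fused gain `Kⱼ = Σᶠ Hⱼᵀ (Rᵘⱼ)⁻¹` under the true noise, plus the surplus
`Σᶠ Φᵗˢ Σᶠ ⪰ 0`. Completing the square around the optimal gain `Σ Hⱼᵀ Rⱼ⁻¹` shows that every
Joseph-form covariance dominates `Σ`, and comparing with the identity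
`Σᶠ = A Pᶠ Aᵀ + Σᶠ Φᶠ Σᶠ` orders `Σᵗ` and `Σᶠ`.
-/

open Matrix
open scoped MatrixOrder

namespace Matrix

variable {n p : Type*}

lemma PosDef.transpose_eq_s17 {A : Matrix n n ℝ} (hA : A.PosDef) : Aᵀ = A := by
  simpa only [conjTranspose_eq_transpose_of_trivial] using hA.isHermitian.eq

variable [Fintype n] [Fintype p]

lemma PosSemidef.mul_mul_transpose_same_s17 {A : Matrix n n ℝ} (hA : A.PosSemidef)
    (B : Matrix p n ℝ) : (B * A * Bᵀ).PosSemidef := by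
  simpa only [conjTranspose_eq_transpose_of_trivial] using hA.mul_mul_conjTranspose_same B

lemma mul_mul_transpose_le_mul_mul_transpose {A B : Matrix n n ℝ} (hAB : A ≤ B)
    (C : Matrix p n ℝ) : C * A * Cᵀ ≤ C * B * Cᵀ := by
  rw [le_iff, ← Matrix.sub_mul, ← Matrix.mul_sub]
  exact hAB.mul_mul_transpose_same_s17 C

lemma posDef_mul_mul_transpose_add {S Q : Matrix n n ℝ} (F : Matrix n n ℝ) (hS : 0 ≤ S)
    (hQ : Q.PosDef) : (F * S * Fᵀ + Q).PosDef :=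
  PosDef.posSemidef_add (hS.posSemidef.mul_mul_transpose_same_s17 F) hQ

lemma gain_error_identity [DecidableEq p] (K : Matrix n p ℝ) (S : Matrix n n ℝ)
    (H : Matrix p n ℝ) {R : Matrix p p ℝ} (hR : R.PosDef) :
    (K - S * Hᵀ * R⁻¹) * R * (K - S * Hᵀ * R⁻¹)ᵀ
      = K * R * Kᵀ - K * H * Sᵀ - S * Hᵀ * Kᵀ + S * (Hᵀ * R⁻¹ * H) * Sᵀ := by
  have hRu : IsUnit R.det := hR.det_pos.ne'.isUnit
  rw [transpose_sub, transpose_mul, transpose_mul, hR.inv.transpose_eq_s17, transpose_transpose]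
  simp only [Matrix.sub_mul, Matrix.mul_sub, Matrix.mul_assoc,
    mul_nonsing_inv_cancel_left _ _ hRu, nonsing_inv_mul_cancel_left _ _ hRu]
  abel

variable {ι : Type*} [Fintype ι] {m : ι → Type*} [∀ j, Fintype (m j)]

lemma posSemidef_sum_smul_transpose_mul_mul {a : ι → ℝ} (ha : ∀ j, 0 ≤ a j)
    (H : ∀ j, Matrix (m j) n ℝ) {W : ∀ j, Matrix (m j) (m j) ℝ} (hW : ∀ j, (W j).PosSemidef) :
    (∑ j, a j • ((H j)ᵀ * W j * H j)).PosSemidef := by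
  refine posSemidef_sum _ fun j _ => PosSemidef.smul ?_ (ha j)
  simpa only [transpose_transpose] using (hW j).mul_mul_transpose_same_s17 (H j)ᵀ

variable [DecidableEq n]

lemma PosDef.inv_le_inv_of_le {A B : Matrix n n ℝ} (hA : A.PosDef) (hAB : A ≤ B) :
    B⁻¹ ≤ A⁻¹ := by
  have hB : B.PosDef := by simpa using hA.add_posSemidef hAB
  have hAu : IsUnit A.det := hA.det_pos.ne'.isUnit
  have hBu : IsUnit B.det := hB.det_pos.ne'.isUnit
  have key : A⁻¹ - B⁻¹ = (A⁻¹ - B⁻¹) * A * (A⁻¹ - B⁻¹)ᵀ + B⁻¹ * (B - A) * (B⁻¹)ᵀ := by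
    rw [transpose_sub, hA.inv.transpose_eq_s17, hB.inv.transpose_eq_s17]
    simp only [Matrix.sub_mul, Matrix.mul_sub, Matrix.mul_assoc,
      nonsing_inv_mul_cancel_left _ _ hAu, mul_nonsing_inv _ hAu, mul_nonsing_inv _ hBu,
      Matrix.mul_one]
    abel
  rw [le_iff, key]
  exact (hA.posSemidef.mul_mul_transpose_same_s17 _).add (hAB.mul_mul_transpose_same_s17 _)

lemma posterior_le_posterior {P₁ P₂ Φ₁ Φ₂ : Matrix n n ℝ} (hP₁ : P₁.PosDef) (hP : P₁ ≤ P₂)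
    (hΦ₂ : Φ₂.PosSemidef) (hΦ : Φ₂ ≤ Φ₁) : (P₁⁻¹ + Φ₁)⁻¹ ≤ (P₂⁻¹ + Φ₂)⁻¹ := by
  have hP₂ : P₂.PosDef := by simpa using hP₁.add_posSemidef hP
  have hX : P₂⁻¹ + Φ₂ ≤ P₁⁻¹ + Φ₁ := add_le_add (hP₁.inv_le_inv_of_le hP) hΦ
  exact (hP₂.inv.add_posSemidef hΦ₂).inv_le_inv_of_le hX

lemma posterior_eq_joseph {P Φ S : Matrix n n ℝ} (hP : P.PosDef) (hΦ : Φ.PosSemidef)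
    (hS : S = (P⁻¹ + Φ)⁻¹) : S = S * P⁻¹ * P * (S * P⁻¹)ᵀ + S * Φ * S := by
  have hX : (P⁻¹ + Φ).PosDef := hP.inv.add_posSemidef hΦ
  have hSt : Sᵀ = S := hS ▸ hX.inv.transpose_eq_s17
  rw [transpose_mul, hSt, hP.inv.transpose_eq_s17,
    Matrix.mul_assoc S, nonsing_inv_mul _ hP.det_pos.ne'.isUnit, Matrix.mul_one,
    ← Matrix.mul_assoc, ← Matrix.add_mul, ← Matrix.mul_add, hS,
    nonsing_inv_mul _ hX.det_pos.ne'.isUnit, Matrix.one_mul]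

lemma joseph_le_posterior {P P' Φ Φ' S : Matrix n n ℝ} (hP : P.PosDef) (hΦ : Φ.PosSemidef)
    (hS : S = (P⁻¹ + Φ)⁻¹) (hP' : P' ≤ P) (hΦ' : Φ' ≤ Φ) :
    S * P⁻¹ * P' * (S * P⁻¹)ᵀ + S * Φ' * S ≤ S := by
  have hSt : Sᵀ = S := hS ▸ (hP.inv.add_posSemidef hΦ).inv.transpose_eq_s17
  calc _ ≤ S * P⁻¹ * P * (S * P⁻¹)ᵀ + S * Φ * S := by
        refine add_le_add (mul_mul_transpose_le_mul_mul_transpose hP' _) ?_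
        simpa only [hSt] using mul_mul_transpose_le_mul_mul_transpose hΦ' S
    _ = S := (posterior_eq_joseph hP hΦ hS).symm

variable [∀ j, DecidableEq (m j)]

theorem posterior_le_joseph {P : Matrix n n ℝ} (hP : P.PosDef) (H : ∀ j, Matrix (m j) n ℝ)
    {R : ∀ j, Matrix (m j) (m j) ℝ} (hR : ∀ j, (R j).PosDef) {a : ι → ℝ} (ha : ∀ j, 0 ≤ a j)
    (K : ∀ j, Matrix n (m j) ℝ) :
    (P⁻¹ + ∑ j, a j • ((H j)ᵀ * (R j)⁻¹ * H j))⁻¹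
      ≤ (1 - ∑ j, a j • (K j * H j)) * P * (1 - ∑ j, a j • (K j * H j))ᵀ
        + ∑ j, a j • (K j * R j * (K j)ᵀ) := by
  set Φ := ∑ j, a j • ((H j)ᵀ * (R j)⁻¹ * H j)
  set L := ∑ j, a j • (K j * H j)
  set N := ∑ j, a j • (K j * R j * (K j)ᵀ)
  set S := (P⁻¹ + Φ)⁻¹
  have hX : (P⁻¹ + Φ).PosDef := hP.inv.add_posSemidef <|
    posSemidef_sum_smul_transpose_mul_mul ha H fun j => (hR j).inv.posSemidef
  have hSS : S * (P⁻¹ + Φ) * S = S := by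
    rw [nonsing_inv_mul _ hX.det_pos.ne'.isUnit, Matrix.one_mul]
  have hSt : Sᵀ = S := hX.inv.transpose_eq_s17
  have hPP : P * P⁻¹ = 1 := mul_nonsing_inv _ hP.det_pos.ne'.isUnit
  have hPP' : P⁻¹ * P = 1 := nonsing_inv_mul _ hP.det_pos.ne'.isUnit
  -- the deviation of `K j` from the optimal gain
  set D := fun j => K j - S * (H j)ᵀ * (R j)⁻¹
  have hD : ∑ j, a j • (D j * R j * (D j)ᵀ) = N - L * S - S * Lᵀ + S * Φ * S := by
    simp only [D, gain_error_identity _ _ _ (hR _)]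
    simp only [hSt, smul_sub, smul_add, Finset.sum_sub_distrib, Finset.sum_add_distrib, N, L, Φ,
      transpose_sum, transpose_smul, transpose_mul, Finset.sum_mul, Finset.mul_sum,
      smul_mul_assoc, mul_smul_comm, Matrix.mul_assoc]
  have hsq : (1 - L) * P * (1 - L)ᵀ + N - S
      = (1 - L - S * P⁻¹) * P * (1 - L - S * P⁻¹)ᵀ + ∑ j, a j • (D j * R j * (D j)ᵀ) := by
    simp only [hD, transpose_sub, transpose_one, transpose_mul, hSt, hP.inv.transpose_eq_s17]
    rw [← sub_eq_zero]
    calc _ = -S + (1 - L) * (P * P⁻¹) * S + S * (P⁻¹ * P) * (1 - Lᵀ) - S * P⁻¹ * (P * P⁻¹) * S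
          + L * S + S * Lᵀ - S * Φ * S := by noncomm_ring
      _ = S - S * (P⁻¹ + Φ) * S := by rw [hPP, hPP']; noncomm_ring
      _ = 0 := by rw [hSS, sub_self]
  rw [le_iff, hsq]
  exact (hP.posSemidef.mul_mul_transpose_same_s17 _).add <| posSemidef_sum _ fun j _ =>
    ((hR j).posSemidef.mul_mul_transpose_same_s17 (D j)).smul (ha j)

theorem posterior_le_joseph_of_nominal {P Pt Pf Sf Φt : Matrix n n ℝ} (hP : P.PosDef)
    (hPt : P ≤ Pt) (hPf : Pf.PosDef) (H : ∀ j, Matrix (m j) n ℝ)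
    {R Ru : ∀ j, Matrix (m j) (m j) ℝ} (hR : ∀ j, (R j).PosDef) (hRu : ∀ j, (Ru j).PosDef)
    {a : ι → ℝ} (ha : ∀ j, 0 ≤ a j)
    (hSf : Sf = (Pf⁻¹ + ∑ j, a j • ((H j)ᵀ * (Ru j)⁻¹ * H j))⁻¹)
    (hΦt : ∑ j, a j • ((H j)ᵀ * (Ru j)⁻¹ * R j * (Ru j)⁻¹ * H j) ≤ Φt) :
    (P⁻¹ + ∑ j, a j • ((H j)ᵀ * (R j)⁻¹ * H j))⁻¹
      ≤ Sf * Pf⁻¹ * Pt * (Sf * Pf⁻¹)ᵀ + Sf * Φt * Sf := by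
  have hX : (Pf⁻¹ + ∑ j, a j • ((H j)ᵀ * (Ru j)⁻¹ * H j)).PosDef := hPf.inv.add_posSemidef <|
    posSemidef_sum_smul_transpose_mul_mul ha H fun j => (hRu j).inv.posSemidef
  have hSft : Sfᵀ = Sf := hSf ▸ hX.inv.transpose_eq_s17
  have hgain : 1 - ∑ j, a j • (Sf * (H j)ᵀ * (Ru j)⁻¹ * H j) = Sf * Pf⁻¹ := by
    have hSX : Sf * (Pf⁻¹ + ∑ j, a j • ((H j)ᵀ * (Ru j)⁻¹ * H j)) = 1 := by
      rw [hSf, nonsing_inv_mul _ hX.det_pos.ne'.isUnit]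
    rw [← hSX, Matrix.mul_add, Finset.mul_sum]
    simp only [mul_smul_comm, Matrix.mul_assoc, add_sub_cancel_right]
  have hnoise : ∑ j, a j • (Sf * (H j)ᵀ * (Ru j)⁻¹ * R j * (Sf * (H j)ᵀ * (Ru j)⁻¹)ᵀ)
      = Sf * (∑ j, a j • ((H j)ᵀ * (Ru j)⁻¹ * R j * (Ru j)⁻¹ * H j)) * Sf := by
    simp only [transpose_mul, hSft, (hRu _).inv.transpose_eq_s17, transpose_transpose,
      Finset.mul_sum, Finset.sum_mul, mul_smul_comm, smul_mul_assoc, Matrix.mul_assoc]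
  have hjos := posterior_le_joseph hP H hR ha fun j => Sf * (H j)ᵀ * (Ru j)⁻¹
  rw [hgain, hnoise] at hjos
  calc _ ≤ _ := hjos
    _ ≤ _ := add_le_add (mul_mul_transpose_le_mul_mul_transpose hPt _)
        (by simpa only [hSft] using mul_mul_transpose_le_mul_mul_transpose hΦt Sf)

end Matrix

namespace FusedKalmanFilter

variable {n ι : Type*} [Fintype n] [DecidableEq n] [Fintype ι] {m : ι → Type*}
  [∀ j, Fintype (m j)] [∀ j, DecidableEq (m j)]
  {F S₀ Sf₀ St₀ Q Qu Φ Φf Φt S Sf St : Matrix n n ℝ}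

/- `S`, `Sf`, `St` stand for `Σ_t`, `Σᶠ_t`, `Σᵗ_t`, and `S₀`, `Sf₀`, `St₀` for the same
covariances at time `t - 1`. -/

lemma posterior_nonneg (h₀ : 0 ≤ S₀) (hQ : Q.PosDef) (hΦ : Φ.PosSemidef)
    (hS : S = ((F * S₀ * Fᵀ + Q)⁻¹ + Φ)⁻¹) : 0 ≤ S :=
  hS ▸ ((posDef_mul_mul_transpose_add F h₀ hQ).inv.add_posSemidef hΦ).inv.posSemidef.nonneg

lemma nominal_le_standard (h₀ : 0 ≤ Sf₀) (hQu : Qu.PosDef) (hΦ : Φ.PosSemidef)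
    (hS₀ : Sf₀ ≤ S₀) (hQ : Qu ≤ Q) (hΦf : Φ ≤ Φf)
    (hS : S = ((F * S₀ * Fᵀ + Q)⁻¹ + Φ)⁻¹) (hSf : Sf = ((F * Sf₀ * Fᵀ + Qu)⁻¹ + Φf)⁻¹) :
    Sf ≤ S := by
  rw [hS, hSf]
  exact posterior_le_posterior (posDef_mul_mul_transpose_add F h₀ hQu)
    (add_le_add (mul_mul_transpose_le_mul_mul_transpose hS₀ F) hQ) hΦ hΦf

lemma standard_le_actual (h₀ : 0 ≤ S₀) (h₀f : 0 ≤ Sf₀) (hQ : Q.PosDef) (hQu : Qu.PosDef)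
    (hS₀ : S₀ ≤ St₀) (H : ∀ j, Matrix (m j) n ℝ) {R Ru : ∀ j, Matrix (m j) (m j) ℝ}
    (hR : ∀ j, (R j).PosDef) (hRu : ∀ j, (Ru j).PosDef) {a : ι → ℝ} (ha : ∀ j, 0 ≤ a j)
    (hΦt : ∑ j, a j • ((H j)ᵀ * (Ru j)⁻¹ * R j * (Ru j)⁻¹ * H j) ≤ Φt)
    (hS : S = ((F * S₀ * Fᵀ + Q)⁻¹ + ∑ j, a j • ((H j)ᵀ * (R j)⁻¹ * H j))⁻¹)
    (hSf : Sf = ((F * Sf₀ * Fᵀ + Qu)⁻¹ + ∑ j, a j • ((H j)ᵀ * (Ru j)⁻¹ * H j))⁻¹)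
    (hSt : St = Sf * (F * Sf₀ * Fᵀ + Qu)⁻¹ * (F * St₀ * Fᵀ + Q) * (Sf * (F * Sf₀ * Fᵀ + Qu)⁻¹)ᵀ
      + Sf * Φt * Sf) :
    S ≤ St := by
  rw [hS, hSt]
  exact posterior_le_joseph_of_nominal (posDef_mul_mul_transpose_add F h₀ hQ)
    (add_le_add (mul_mul_transpose_le_mul_mul_transpose hS₀ F) le_rfl)
    (posDef_mul_mul_transpose_add F h₀f hQu) H hR hRu ha hSf hΦt

lemma actual_le_nominal (h₀f : 0 ≤ Sf₀) (hQu : Qu.PosDef) (hΦf : Φf.PosSemidef)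
    (hS₀ : St₀ ≤ Sf₀) (hQ : Q ≤ Qu) (hΦt : Φt ≤ Φf) (hSf : Sf = ((F * Sf₀ * Fᵀ + Qu)⁻¹ + Φf)⁻¹)
    (hSt : St = Sf * (F * Sf₀ * Fᵀ + Qu)⁻¹ * (F * St₀ * Fᵀ + Q) * (Sf * (F * Sf₀ * Fᵀ + Qu)⁻¹)ᵀ
      + Sf * Φt * Sf) :
    St ≤ Sf := by
  rw [hSt]
  exact joseph_le_posterior (posDef_mul_mul_transpose_add F h₀f hQu) hΦf hSf
    (add_le_add (mul_mul_transpose_le_mul_mul_transpose hS₀ F) hQ) hΦt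

end FusedKalmanFilter

open FusedKalmanFilter

lemma Int.le_induction_sub_one {k m : ℤ} {p : ℤ → Prop} (hkm : k - 1 ≤ m) (h₀ : p (k - 1))
    (hstep : ∀ t, k ≤ t → t ≤ m → p (t - 1) → p t) : p m := by
  suffices ∀ t, k - 1 ≤ t → t ≤ m → p t from this m hkm le_rfl
  intro t ht
  induction t, ht using Int.leInduction with
  | base => exact fun _ => h₀
  | succ t ht ih =>
    intro htm
    simpa using hstep (t + 1) (by omega) htm (by simpa using ih (by omega))

theorem stmt17_general {n N : ℕ}
    (k m : ℤ) (hkm : k ≤ m)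
    (F : Matrix (Fin n) (Fin n) ℝ)
    (md : Fin N → ℕ)
    (H : ∀ j, Matrix (Fin (md j)) (Fin n) ℝ)
    (a : Fin N → ℝ) (ha : ∀ j, 0 ≤ a j)
    (R Ru : ∀ j, ℤ → Matrix (Fin (md j)) (Fin (md j)) ℝ)
    (hR : ∀ j t, k ≤ t → t ≤ m → (R j t).PosDef)
    (hRu : ∀ j t, k ≤ t → t ≤ m → (Ru j t).PosDef)
    (Q Qu : ℤ → Matrix (Fin n) (Fin n) ℝ)
    (hQ : ∀ t, k - 1 ≤ t → t ≤ m - 1 → (Q t).PosDef)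
    (hQu : ∀ t, k - 1 ≤ t → t ≤ m - 1 → (Qu t).PosDef)
    (Phi Phif Phit Phits : ℤ → Matrix (Fin n) (Fin n) ℝ)
    (hPhi : ∀ t, Phi t = ∑ j, a j • ((H j)ᵀ * (R j t)⁻¹ * H j))
    (hPhif : ∀ t, Phif t = ∑ j, a j • ((H j)ᵀ * (Ru j t)⁻¹ * H j))
    (hPhit : ∀ t, Phit t =
      ∑ j, (a j) ^ 2 • ((H j)ᵀ * (Ru j t)⁻¹ * R j t * (Ru j t)⁻¹ * H j))
    (hPhits : ∀ t, Phits t =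
      ∑ j, ((a j) ^ 2 - a j) • ((H j)ᵀ * (Ru j t)⁻¹ * R j t * (Ru j t)⁻¹ * H j))
    (S : Matrix (Fin n) (Fin n) ℝ) (hS : S.PosSemidef)
    (Sig Sigf Sigt : ℤ → Matrix (Fin n) (Fin n) ℝ)
    (hSigInit : Sig (k - 1) = S)
    (hSigfInit : Sigf (k - 1) = S)
    (hSigtInit : Sigt (k - 1) = S)
    (hSigRec : ∀ t, k ≤ t → t ≤ m →
      Sig t = ((F * Sig (t - 1) * Fᵀ + Q (t - 1))⁻¹ + Phi t)⁻¹)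
    (hSigfRec : ∀ t, k ≤ t → t ≤ m →
      Sigf t = ((F * Sigf (t - 1) * Fᵀ + Qu (t - 1))⁻¹ + Phif t)⁻¹)
    (hSigtRec : ∀ t, k ≤ t → t ≤ m →
      Sigt t = (Sigf t * (F * Sigf (t - 1) * Fᵀ + Qu (t - 1))⁻¹)
          * (F * Sigt (t - 1) * Fᵀ + Q (t - 1))
          * (Sigf t * (F * Sigf (t - 1) * Fᵀ + Qu (t - 1))⁻¹)ᵀ
        + Sigf t * Phit t * Sigf t) :
    ((∀ t, k ≤ t → t ≤ m →
        (Phif t - Phi t).PosSemidef ∧ (Phit t - Phif t).PosSemidef ∧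
        (Phits t).PosSemidef ∧ (Q (t - 1) - Qu (t - 1)).PosDef) →
      (Sig m - Sigf m).PosSemidef ∧ (Sigt m - Sig m).PosSemidef) ∧
    ((∀ t, k ≤ t → t ≤ m →
        (Phif t - Phit t).PosSemidef ∧ (Phi t - Phif t).PosSemidef ∧
        (Phits t).PosSemidef ∧ (Qu (t - 1) - Q (t - 1)).PosDef) →
      (Sigt m - Sig m).PosSemidef ∧ (Sigf m - Sigt m).PosSemidef) := by
  have hQ' : ∀ t, k ≤ t → t ≤ m → (Q (t - 1)).PosDef := fun t h₁ h₂ => hQ _ (by omega) (by omega)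
  have hQu' : ∀ t, k ≤ t → t ≤ m → (Qu (t - 1)).PosDef :=
    fun t h₁ h₂ => hQu _ (by omega) (by omega)
  have hΦ : ∀ t, k ≤ t → t ≤ m → (Phi t).PosSemidef := fun t h₁ h₂ =>
    hPhi t ▸ posSemidef_sum_smul_transpose_mul_mul ha H fun j => (hR j t h₁ h₂).inv.posSemidef
  have hΦf : ∀ t, k ≤ t → t ≤ m → (Phif t).PosSemidef := fun t h₁ h₂ =>
    hPhif t ▸ posSemidef_sum_smul_transpose_mul_mul ha H fun j => (hRu j t h₁ h₂).inv.posSemidef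
  have hΦt : ∀ t, (Phits t).PosSemidef →
      ∑ j, a j • ((H j)ᵀ * (Ru j t)⁻¹ * R j t * (Ru j t)⁻¹ * H j) ≤ Phit t := fun t hΦts => by
    rw [le_iff, hPhit]
    simpa only [hPhits, sub_smul, Finset.sum_sub_distrib] using hΦts
  have hmid : ∀ t, k ≤ t → t ≤ m → 0 ≤ Sig (t - 1) → 0 ≤ Sigf (t - 1) →
      Sig (t - 1) ≤ Sigt (t - 1) → (Phits t).PosSemidef → Sig t ≤ Sigt t :=
    fun t h₁ h₂ h₀ h₀f hS₀ hΦts => standard_le_actual h₀ h₀f (hQ' t h₁ h₂) (hQu' t h₁ h₂) hS₀ H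
      (hR · t h₁ h₂) (hRu · t h₁ h₂) ha (hΦt t hΦts) (hPhi t ▸ hSigRec t h₁ h₂)
      (hPhif t ▸ hSigfRec t h₁ h₂) (hSigtRec t h₁ h₂)
  refine ⟨fun hc => ?_, fun hc => ?_⟩
  · refine (Int.le_induction_sub_one (p := fun t => 0 ≤ Sigf t ∧ Sigf t ≤ Sig t ∧ Sig t ≤ Sigt t)
      (by omega : k - 1 ≤ m) ?_ fun t h₁ h₂ ⟨h₀, hfs, hst⟩ => ?_).2
    · rw [hSigfInit, hSigInit, hSigtInit]
      exact ⟨hS.nonneg, le_rfl, le_rfl⟩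
    obtain ⟨hΦΦf, -, hΦts, hQQu⟩ := hc t h₁ h₂
    exact ⟨posterior_nonneg h₀ (hQu' t h₁ h₂) (hΦf t h₁ h₂) (hSigfRec t h₁ h₂),
      nominal_le_standard h₀ (hQu' t h₁ h₂) (hΦ t h₁ h₂) hfs hQQu.posSemidef hΦΦf
        (hSigRec t h₁ h₂) (hSigfRec t h₁ h₂),
      hmid t h₁ h₂ (h₀.trans hfs) h₀ hst hΦts⟩
  · refine (Int.le_induction_sub_one (p := fun t => 0 ≤ Sig t ∧ Sig t ≤ Sigt t ∧ Sigt t ≤ Sigf t)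
      (by omega : k - 1 ≤ m) ?_ fun t h₁ h₂ ⟨h₀, hst, htf⟩ => ?_).2
    · rw [hSigInit, hSigtInit, hSigfInit]
      exact ⟨hS.nonneg, le_rfl, le_rfl⟩
    obtain ⟨hΦtΦf, -, hΦts, hQuQ⟩ := hc t h₁ h₂
    have h₀f : 0 ≤ Sigf (t - 1) := h₀.trans (hst.trans htf)
    exact ⟨posterior_nonneg h₀ (hQ' t h₁ h₂) (hΦ t h₁ h₂) (hSigRec t h₁ h₂),
      hmid t h₁ h₂ h₀ h₀f hst hΦts,
      actual_le_nominal h₀f (hQu' t h₁ h₂) (hΦf t h₁ h₂) htf hQuQ.posSemidef hΦtΦf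
        (hSigfRec t h₁ h₂) (hSigtRec t h₁ h₂)⟩

/-- Theorem 7 of the paper (recursive relations): starting from a common initial
matrix `S` at time `k−1` and iterating the standard, nominal, and actual recursions,
(1) if for every `t ∈ {k,…,m}` one has `Φ_t ⪯ Φᶠ_t ⪯ Φᵗ_t`, `Φᵗˢ_t ⪰ 0` and
`ΔQ_{t−1} ≺ 0`, then `Σᶠ_m ⪯ Σ_m ⪯ Σᵗ_m`; (2) if for every `t ∈ {k,…,m}` one has
`Φᵗ_t ⪯ Φᶠ_t ⪯ Φ_t`, `Φᵗˢ_t ⪰ 0` and `ΔQ_{t−1} ≻ 0`, then `Σ_m ⪯ Σᵗ_m ⪯ Σᶠ_m`. -/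
theorem stmt17 {n N : ℕ} (hn : 1 ≤ n) (hN : 1 ≤ N)
    (k m : ℤ) (hkm : k ≤ m)
    (F : Matrix (Fin n) (Fin n) ℝ)
    (md : Fin N → ℕ) (hmd : ∀ j, 1 ≤ md j)
    (H : ∀ j, Matrix (Fin (md j)) (Fin n) ℝ)
    (a : Fin N → ℝ) (ha : ∀ j, 0 ≤ a j)
    (R Ru : ∀ j, ℤ → Matrix (Fin (md j)) (Fin (md j)) ℝ)
    (hRsymm : ∀ j t, k ≤ t → t ≤ m → (R j t).IsSymm)
    (hRusymm : ∀ j t, k ≤ t → t ≤ m → (Ru j t).IsSymm)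
    (hR : ∀ j t, k ≤ t → t ≤ m → (R j t).PosDef)
    (hRu : ∀ j t, k ≤ t → t ≤ m → (Ru j t).PosDef)
    (Q Qu : ℤ → Matrix (Fin n) (Fin n) ℝ)
    (hQsymm : ∀ t, k - 1 ≤ t → t ≤ m - 1 → (Q t).IsSymm)
    (hQusymm : ∀ t, k - 1 ≤ t → t ≤ m - 1 → (Qu t).IsSymm)
    (hQ : ∀ t, k - 1 ≤ t → t ≤ m - 1 → (Q t).PosDef)
    (hQu : ∀ t, k - 1 ≤ t → t ≤ m - 1 → (Qu t).PosDef)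
    (Phi Phif Phit Phits : ℤ → Matrix (Fin n) (Fin n) ℝ)
    (hPhi : ∀ t, Phi t = ∑ j, a j • ((H j)ᵀ * (R j t)⁻¹ * H j))
    (hPhif : ∀ t, Phif t = ∑ j, a j • ((H j)ᵀ * (Ru j t)⁻¹ * H j))
    (hPhit : ∀ t, Phit t =
      ∑ j, (a j) ^ 2 • ((H j)ᵀ * (Ru j t)⁻¹ * R j t * (Ru j t)⁻¹ * H j))
    (hPhits : ∀ t, Phits t =
      ∑ j, ((a j) ^ 2 - a j) • ((H j)ᵀ * (Ru j t)⁻¹ * R j t * (Ru j t)⁻¹ * H j))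
    (S : Matrix (Fin n) (Fin n) ℝ) (hS : S.PosSemidef)
    (Sig Sigf Sigt : ℤ → Matrix (Fin n) (Fin n) ℝ)
    (hSigInit : Sig (k - 1) = S)
    (hSigfInit : Sigf (k - 1) = S)
    (hSigtInit : Sigt (k - 1) = S)
    (hSigRec : ∀ t, k ≤ t → t ≤ m →
      Sig t = ((F * Sig (t - 1) * Fᵀ + Q (t - 1))⁻¹ + Phi t)⁻¹)
    (hSigfRec : ∀ t, k ≤ t → t ≤ m →
      Sigf t = ((F * Sigf (t - 1) * Fᵀ + Qu (t - 1))⁻¹ + Phif t)⁻¹)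
    (hSigtRec : ∀ t, k ≤ t → t ≤ m →
      Sigt t = (Sigf t * (F * Sigf (t - 1) * Fᵀ + Qu (t - 1))⁻¹)
          * (F * Sigt (t - 1) * Fᵀ + Q (t - 1))
          * (Sigf t * (F * Sigf (t - 1) * Fᵀ + Qu (t - 1))⁻¹)ᵀ
        + Sigf t * Phit t * Sigf t) :
    ((∀ t, k ≤ t → t ≤ m →
        (Phif t - Phi t).PosSemidef ∧ (Phit t - Phif t).PosSemidef ∧
        (Phits t).PosSemidef ∧ (Q (t - 1) - Qu (t - 1)).PosDef) →
      (Sig m - Sigf m).PosSemidef ∧ (Sigt m - Sig m).PosSemidef) ∧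
    ((∀ t, k ≤ t → t ≤ m →
        (Phif t - Phit t).PosSemidef ∧ (Phi t - Phif t).PosSemidef ∧
        (Phits t).PosSemidef ∧ (Qu (t - 1) - Q (t - 1)).PosDef) →
      (Sigt m - Sig m).PosSemidef ∧ (Sigf m - Sigt m).PosSemidef) :=
  stmt17_general k m hkm F md H a ha R Ru hR hRu Q Qu hQ hQu Phi Phif Phit Phits hPhi hPhif hPhit
    hPhits S hS Sig Sigf Sigt hSigInit hSigfInit hSigtInit hSigRec hSigfRec hSigtRec
end
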